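/- arXiv:2305.06570 — 4 statements merged into one kernel-verified Lean document; each statement's English description precedes it below -/
import Mathlib

section
/- For every infinite sequence X over a finite alphabet Σ₁ (with |Σ₁| ≥ 2) and every infinite sequence Y over a finite alphabet Σ₂, the conditional block entropy rate satisfies H(X|Y) ≤ dim_FS^Y(X). -/
open Filter

/-- A finite-state gambler over alphabet `α` with state space `Fin (m+1)`. -/
structure FSG (α : Type) [Fintype α] (m : ℕ) where
  δ : Fin (m + 1) → α → Fin (m + 1)
  bet : Fin (m + 1) → α → ℚ
  bet_nonneg : ∀ q a, 0 ≤ bet q a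
  bet_sum : ∀ q, ∑ a, bet q a = 1
  q₀ : Fin (m + 1)

namespace FSG

variable {α : Type} [Fintype α] {m : ℕ}

/-- The state reached after reading the first `n` symbols of `X`. -/
def state (G : FSG α m) (X : ℕ → α) : ℕ → Fin (m + 1)
  | 0 => G.q₀
  | n + 1 => G.δ (G.state X n) (X n)

/-- The value of the `s`-gale of `G` on the prefix `X[:n]`. -/
noncomputable def capital (G : FSG α m) (s : ℝ) (X : ℕ → α) : ℕ → ℝ
  | 0 => 1
  | n + 1 => (Fintype.card α : ℝ) ^ s * (G.bet (G.state X n) (X n) : ℝ) * G.capital s X n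

/-- The `s`-gale of `G` succeeds on `X` : `limsup_n d(X[:n]) = ∞`. -/
def Succeeds (G : FSG α m) (s : ℝ) (X : ℕ → α) : Prop :=
  ∀ C : ℝ, ∃ n, C < G.capital s X n

/-- The `s`-gale of `G` strongly succeeds on `X` : `liminf_n d(X[:n]) = ∞`. -/
def StrSucceeds (G : FSG α m) (s : ℝ) (X : ℕ → α) : Prop :=
  Tendsto (G.capital s X) atTop atTop

end FSG

/-- Finite-state dimension of a sequence. -/
noncomputable def dimFS {α : Type} [Fintype α] (X : ℕ → α) : ℝ :=
  sInf {s : ℝ | 0 ≤ s ∧ ∃ (m : ℕ) (G : FSG α m), G.Succeeds s X}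

/-- Finite-state strong dimension of a sequence. -/
noncomputable def DimFS {α : Type} [Fintype α] (X : ℕ → α) : ℝ :=
  sInf {s : ℝ | 0 ≤ s ∧ ∃ (m : ℕ) (G : FSG α m), G.StrSucceeds s X}

/-- A finite-state relative gambler over input alphabet `α`, oracle alphabet `β`,
oracle window length `ℓ`, with state space `Fin (m+1)`. -/
structure FSRG (α β : Type) [Fintype α] [Fintype β] (ℓ m : ℕ) where
  δ : Fin (m + 1) → (Fin ℓ → β) → α → Fin (m + 1)
  bet : Fin (m + 1) → (Fin ℓ → β) → α → ℚ
  bet_nonneg : ∀ q y a, 0 ≤ bet q y a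
  bet_sum : ∀ q y, ∑ a, bet q y a = 1
  q₀ : Fin (m + 1)

namespace FSRG

variable {α β : Type} [Fintype α] [Fintype β] {ℓ m : ℕ}

/-- The state reached after reading the first `n` symbols of `X`, with oracle `Y`
(the oracle window at step `i` being `Y[i:i+ℓ]`). -/
def state (G : FSRG α β ℓ m) (Y : ℕ → β) (X : ℕ → α) : ℕ → Fin (m + 1)
  | 0 => G.q₀
  | n + 1 => G.δ (G.state Y X n) (fun j => Y (n + j.val)) (X n)

/-- The value of the `s`-gale of `G` with oracle `Y` on the prefix `X[:n]`. -/
noncomputable def capital (G : FSRG α β ℓ m) (s : ℝ) (Y : ℕ → β) (X : ℕ → α) : ℕ → ℝ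
  | 0 => 1
  | n + 1 =>
      (Fintype.card α : ℝ) ^ s * (G.bet (G.state Y X n) (fun j => Y (n + j.val)) (X n) : ℝ) *
        G.capital s Y X n

/-- Success: `limsup_n d(X[:n]) = ∞`. -/
def Succeeds (G : FSRG α β ℓ m) (s : ℝ) (Y : ℕ → β) (X : ℕ → α) : Prop :=
  ∀ C : ℝ, ∃ n, C < G.capital s Y X n

/-- Strong success: `liminf_n d(X[:n]) = ∞`. -/
def StrSucceeds (G : FSRG α β ℓ m) (s : ℝ) (Y : ℕ → β) (X : ℕ → α) : Prop :=
  Tendsto (G.capital s Y X) atTop atTop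

end FSRG

/-- Finite-state relative dimension `dim_FS^Y(X)`. -/
noncomputable def dimFSRel {α β : Type} [Fintype α] [Fintype β] (X : ℕ → α) (Y : ℕ → β) : ℝ :=
  sInf {s : ℝ | 0 ≤ s ∧ ∃ (ℓ m : ℕ) (G : FSRG α β ℓ m), G.Succeeds s Y X}

/-- Finite-state relative strong dimension `Dim_FS^Y(X)`. -/
noncomputable def DimFSRel {α β : Type} [Fintype α] [Fintype β] (X : ℕ → α) (Y : ℕ → β) : ℝ :=
  sInf {s : ℝ | 0 ≤ s ∧ ∃ (ℓ m : ℕ) (G : FSRG α β ℓ m), G.StrSucceeds s Y X}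

open Classical in
/-- `N(u,x;v,y)`: the number of indices `i < k` such that the `i`-th disjoint block of
length `ℓ` of `X` equals `u` and that of `Y` equals `v`. -/
noncomputable def blockCount {α β : Type} (X : ℕ → α) (Y : ℕ → β) (ℓ k : ℕ)
    (u : Fin ℓ → α) (v : Fin ℓ → β) : ℕ :=
  ((Finset.range k).filter fun i =>
    (∀ j : Fin ℓ, X (i * ℓ + j.val) = u j) ∧ ∀ j : Fin ℓ, Y (i * ℓ + j.val) = v j).card

/-- The `ℓ`-length conditional block entropy `H_ℓ(X[:kℓ] | Y[:kℓ])`.  (Terms with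
`N(u,x;v,y) = 0` vanish since `0 · log 0 = 0` under Mathlib's convention `log 0 = 0`.) -/
noncomputable def condBlockEntropy {α β : Type} [Fintype α] [Fintype β]
    (X : ℕ → α) (Y : ℕ → β) (ℓ k : ℕ) : ℝ :=
  -(1 / (ℓ * Real.log (Fintype.card α))) *
    ∑ v : Fin ℓ → β, ∑ u : Fin ℓ → α,
      ((blockCount X Y ℓ k u v : ℝ) / k) *
        Real.log ((blockCount X Y ℓ k u v : ℝ) /
          ∑ u' : Fin ℓ → α, (blockCount X Y ℓ k u' v : ℝ))

/-- `H_ℓ(X|Y) = liminf_{k → ∞} H_ℓ(X[:kℓ] | Y[:kℓ])`. -/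
noncomputable def relBlockEntropyAt {α β : Type} [Fintype α] [Fintype β]
    (X : ℕ → α) (Y : ℕ → β) (ℓ : ℕ) : ℝ :=
  liminf (fun k => condBlockEntropy X Y ℓ k) atTop

/-- `H(X|Y) = inf_{ℓ ≥ 1} H_ℓ(X|Y)`. -/
noncomputable def relBlockEntropy {α β : Type} [Fintype α] [Fintype β]
    (X : ℕ → α) (Y : ℕ → β) : ℝ :=
  ⨅ ℓ : ℕ, relBlockEntropyAt X Y (ℓ + 1)

/-- `H̄_ℓ(X|Y) = limsup_{k → ∞} H_ℓ(X[:kℓ] | Y[:kℓ])`. -/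
noncomputable def relUpperBlockEntropyAt {α β : Type} [Fintype α] [Fintype β]
    (X : ℕ → α) (Y : ℕ → β) (ℓ : ℕ) : ℝ :=
  limsup (fun k => condBlockEntropy X Y ℓ k) atTop

/-- `H̄(X|Y) = inf_{ℓ ≥ 1} H̄_ℓ(X|Y)`. -/
noncomputable def relUpperBlockEntropy {α β : Type} [Fintype α] [Fintype β]
    (X : ℕ → α) (Y : ℕ → β) : ℝ :=
  ⨅ ℓ : ℕ, relUpperBlockEntropyAt X Y (ℓ + 1)

/-- The arithmetic-progression subsequence `A_{d,a}(X) = X[a] X[a+d] X[a+2d] …`. -/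
def AP {α : Type} (X : ℕ → α) (d a : ℕ) : ℕ → α := fun n => X (a + n * d)

/-- The product sequence of a family of sequences: its `n`-th symbol is the tuple
of the `n`-th symbols. -/
def prodSeq {α ι : Type} (Ys : ι → ℕ → α) : ℕ → ι → α := fun n i => Ys i n

/-- Relative dimension with a finite family of oracle sequences, via the product sequence. -/
noncomputable def dimFSRelFam {α ι : Type} [Fintype α] [Fintype ι] [DecidableEq ι]
    (X : ℕ → α) (Ys : ι → ℕ → α) : ℝ :=
  dimFSRel X (prodSeq Ys)

/-- Relative strong dimension with a finite family of oracle sequences. -/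
noncomputable def DimFSRelFam {α ι : Type} [Fintype α] [Fintype ι] [DecidableEq ι]
    (X : ℕ → α) (Ys : ι → ℕ → α) : ℝ :=
  DimFSRel X (prodSeq Ys)

/-- The interleaving `Y₀ ⊕ ⋯ ⊕ Y_{n-1}`: the `i`-th symbol is `Y_{i mod n}[⌊i/n⌋]`. -/
def interleave {α : Type} {n : ℕ} (hn : 0 < n) (Ys : Fin n → ℕ → α) : ℕ → α :=
  fun i => Ys ⟨i % n, Nat.mod_lt i hn⟩ (i / n)

/-- The interleaving `A ⊕ B` of two sequences. -/
def interleave2 {α : Type} (A B : ℕ → α) : ℕ → α :=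
  fun i => if i % 2 = 0 then A (i / 2) else B (i / 2)

/-!
A gambler whose `s`-gale succeeds has, infinitely often, capital at least `1` at a block boundary
`k L`. There its bets give the observed input prefix probability at least `|Σ₁| ^ (-s k L)`, and
this probability is the product of the probabilities of the `k` blocks. Averaging the block
probabilities over the `m + 1` start states and the `|Σ₂| ^ ℓ` oracle look-aheads past the block
gives one conditional distribution `Q (u | v)` of input blocks given oracle blocks, losing a factor
at most `(m + 1) |Σ₂| ^ ℓ` per block. By Gibbs' inequality the empirical conditional block entropy
is at most the code length `-log ∏ Q`, so `H_L ≤ s + log ((m + 1) |Σ₂| ^ ℓ) / (L log |Σ₁|)`;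
let `L → ∞`.
-/

open Finset Real

def extendTuple {α : Type} {n : ℕ} (a₀ : α) (u : Fin n → α) : ℕ → α :=
  fun i => if h : i < n then u ⟨i, h⟩ else a₀

def seqBlock {α : Type} (X : ℕ → α) (L i : ℕ) : Fin L → α :=
  fun t => X (i * L + t)

lemma extendTuple_of_lt {α : Type} (a₀ : α) (X : ℕ → α) {n i : ℕ} (hi : i < n) :
    extendTuple a₀ (fun j : Fin n => X j) i = X i := by
  simp [extendTuple, hi]

lemma extendTuple_snoc_of_lt {α : Type} (a₀ a : α) {n : ℕ} (u : Fin n → α) {i : ℕ}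
    (hi : i < n) :
    extendTuple a₀ (Fin.snoc u a : Fin (n + 1) → α) i = extendTuple a₀ u i := by
  simp only [extendTuple, hi, Nat.lt_succ_of_lt hi, dite_true]
  exact Fin.snoc_castSucc (i := ⟨i, hi⟩) ..

lemma extendTuple_snoc_self {α : Type} (a₀ a : α) {n : ℕ} (u : Fin n → α) :
    extendTuple a₀ (Fin.snoc u a : Fin (n + 1) → α) n = a := by
  simp only [extendTuple, Nat.lt_succ_self, dite_true]
  exact Fin.snoc_last (α := fun _ => α) ..

namespace FSRG

variable {α β : Type} [Fintype α] [Fintype β] {ℓ m : ℕ}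

def withStart (G : FSRG α β ℓ m) (q : Fin (m + 1)) : FSRG α β ℓ m := { G with q₀ := q }

@[simp]
lemma withStart_bet (G : FSRG α β ℓ m) (q : Fin (m + 1)) : (G.withStart q).bet = G.bet := rfl

lemma bet_le_one (G : FSRG α β ℓ m) (q : Fin (m + 1)) (y : Fin ℓ → β) (a : α) :
    G.bet q y a ≤ 1 :=
  G.bet_sum q y ▸ single_le_sum (fun b _ => G.bet_nonneg q y b) (mem_univ a)

lemma capital_nonneg (G : FSRG α β ℓ m) (s : ℝ) (Y : ℕ → β) (X : ℕ → α) (n : ℕ) :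
    0 ≤ G.capital s Y X n := by
  induction n with
  | zero => exact zero_le_one
  | succ n ih =>
    have := G.bet_nonneg (G.state Y X n) (fun j => Y (n + j)) (X n)
    rw [capital]
    positivity

lemma capital_succ_le (G : FSRG α β ℓ m) (s : ℝ) (Y : ℕ → β) (X : ℕ → α) (n : ℕ) :
    G.capital s Y X (n + 1) ≤ (Fintype.card α : ℝ) ^ s * G.capital s Y X n := by
  have hbet : (G.bet (G.state Y X n) (fun j => Y (n + j)) (X n) : ℝ) ≤ 1 := by
    exact_mod_cast G.bet_le_one ..
  rw [capital, mul_assoc]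
  gcongr
  exact mul_le_of_le_one_left (G.capital_nonneg s Y X n) hbet

lemma capital_add_le (G : FSRG α β ℓ m) (s : ℝ) (Y : ℕ → β) (X : ℕ → α) (n t : ℕ) :
    G.capital s Y X (n + t) ≤ ((Fintype.card α : ℝ) ^ s) ^ t * G.capital s Y X n := by
  induction t with
  | zero => simp
  | succ t ih =>
    calc G.capital s Y X (n + t + 1)
        ≤ (Fintype.card α : ℝ) ^ s * G.capital s Y X (n + t) := G.capital_succ_le s Y X _
      _ ≤ (Fintype.card α : ℝ) ^ s * (((Fintype.card α : ℝ) ^ s) ^ t * G.capital s Y X n) := by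
        gcongr
      _ = _ := by ring

/-- The `0`-gale is the probability that the gambler's bets assign to the prefix. -/
lemma capital_eq_rpow_pow_mul (G : FSRG α β ℓ m) (s : ℝ) (Y : ℕ → β) (X : ℕ → α) (n : ℕ) :
    G.capital s Y X n = ((Fintype.card α : ℝ) ^ s) ^ n * G.capital 0 Y X n := by
  induction n with
  | zero => simp [capital]
  | succ n ih => rw [capital, capital, ih, rpow_zero]; ring

lemma state_congr (G : FSRG α β ℓ m) {Y Y' : ℕ → β} {X X' : ℕ → α} {n : ℕ}
    (hY : ∀ i < n + ℓ, Y i = Y' i) (hX : ∀ i < n, X i = X' i) :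
    G.state Y X n = G.state Y' X' n := by
  induction n with
  | zero => rfl
  | succ n ih =>
    rw [state, state, ih (fun i hi => hY i (by omega)) (fun i hi => hX i (by omega)),
      hX n (by omega)]
    congr 1
    funext j
    exact hY _ (by omega)

lemma capital_congr (G : FSRG α β ℓ m) (s : ℝ) {Y Y' : ℕ → β} {X X' : ℕ → α} {n : ℕ}
    (hY : ∀ i < n + ℓ, Y i = Y' i) (hX : ∀ i < n, X i = X' i) :
    G.capital s Y X n = G.capital s Y' X' n := by
  induction n with
  | zero => rfl
  | succ n ih =>
    have hY' : ∀ i < n + ℓ, Y i = Y' i := fun i hi => hY i (by omega)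
    have hX' : ∀ i < n, X i = X' i := fun i hi => hX i (by omega)
    rw [capital, capital, ih hY' hX', G.state_congr hY' hX', hX n (by omega)]
    congr 4
    funext j
    exact hY _ (by omega)

lemma state_add (G : FSRG α β ℓ m) (Y : ℕ → β) (X : ℕ → α) (n t : ℕ) :
    G.state Y X (n + t) =
      (G.withStart (G.state Y X n)).state (fun i => Y (n + i)) (fun i => X (n + i)) t := by
  induction t with
  | zero => rfl
  | succ t ih =>
    rw [← Nat.add_assoc, state, state, ih]
    simp only [Nat.add_assoc]
    rfl

lemma capital_add (G : FSRG α β ℓ m) (s : ℝ) (Y : ℕ → β) (X : ℕ → α) (n t : ℕ) :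
    G.capital s Y X (n + t) =
      (G.withStart (G.state Y X n)).capital s (fun i => Y (n + i)) (fun i => X (n + i)) t *
        G.capital s Y X n := by
  induction t with
  | zero => simp [capital]
  | succ t ih =>
    rw [← Nat.add_assoc, capital, capital, ih, state_add, withStart_bet]
    simp only [Nat.add_assoc]
    ring

lemma capital_mul_eq_prod (G : FSRG α β ℓ m) (s : ℝ) (Y : ℕ → β) (X : ℕ → α) (L k : ℕ) :
    G.capital s Y X (k * L) = ∏ j ∈ range k,
      (G.withStart (G.state Y X (j * L))).capital s (fun i => Y (j * L + i))
        (fun i => X (j * L + i)) L := by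
  induction k with
  | zero => simp [capital]
  | succ k ih => rw [Nat.succ_mul, capital_add, ih, prod_range_succ, mul_comm]

lemma sum_capital_zero_extendTuple (G : FSRG α β ℓ m) (Y : ℕ → β) (a₀ : α) (n : ℕ) :
    ∑ u : Fin n → α, G.capital 0 Y (extendTuple a₀ u) n = 1 := by
  induction n with
  | zero => simp [capital]
  | succ n ih =>
    rw [← (Fin.snocEquiv fun _ => α).sum_comp, Fintype.sum_prod_type, sum_comm, ← ih]
    refine sum_congr rfl fun u _ => ?_
    have hY : ∀ i < n + ℓ, Y i = Y i := fun _ _ => rfl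
    have hX (a : α) : ∀ i < n, extendTuple a₀ (Fin.snoc u a : Fin (n + 1) → α) i =
        extendTuple a₀ u i := fun i hi => extendTuple_snoc_of_lt a₀ a u hi
    simp only [Fin.snocEquiv, Equiv.coe_fn_mk, capital, rpow_zero, one_mul,
      G.capital_congr 0 hY (hX _), G.state_congr hY (hX _), extendTuple_snoc_self]
    rw [← sum_mul, ← Rat.cast_sum, G.bet_sum, Rat.cast_one, one_mul]

/-- Averaging over start states and look-aheads `w` past the block makes this conditional block
distribution independent of where the block occurs. -/
noncomputable def avgBlockProb (G : FSRG α β ℓ m) (a₀ : α) (b₀ : β) {L : ℕ}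
    (v : Fin L → β) (u : Fin L → α) : ℝ :=
  (∑ q : Fin (m + 1), ∑ w : Fin ℓ → β,
      (G.withStart q).capital 0 (extendTuple b₀ (Fin.append v w)) (extendTuple a₀ u) L) /
    ((m + 1) * Fintype.card β ^ ℓ)

lemma avgBlockProb_nonneg (G : FSRG α β ℓ m) (a₀ : α) (b₀ : β) {L : ℕ} (v : Fin L → β)
    (u : Fin L → α) : 0 ≤ G.avgBlockProb a₀ b₀ v u :=
  div_nonneg (sum_nonneg fun _ _ => sum_nonneg fun _ _ => capital_nonneg ..) (by positivity)

lemma sum_avgBlockProb (G : FSRG α β ℓ m) (a₀ : α) (b₀ : β) {L : ℕ} (v : Fin L → β) :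
    ∑ u, G.avgBlockProb a₀ b₀ v u = 1 := by
  have : 0 < Fintype.card β := Fintype.card_pos_iff.2 ⟨b₀⟩
  simp only [avgBlockProb, ← sum_div]
  simp_rw [sum_comm (γ := Fin L → α), sum_capital_zero_extendTuple]
  simp only [sum_const, card_univ, Fintype.card_fun, Fintype.card_fin, nsmul_eq_mul, mul_one]
  field_simp
  push_cast
  ring

lemma capital_zero_le_mul_avgBlockProb (G : FSRG α β ℓ m) (a₀ : α) (b₀ : β)
    (q : Fin (m + 1)) (Y : ℕ → β) (X : ℕ → α) (L : ℕ) :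
    (G.withStart q).capital 0 Y X L ≤
      ((m + 1) * Fintype.card β ^ ℓ) *
        G.avgBlockProb a₀ b₀ (fun i : Fin L => Y i) (fun i : Fin L => X i) := by
  have : 0 < Fintype.card β := Fintype.card_pos_iff.2 ⟨b₀⟩
  have hsplit : Fin.append (fun i : Fin L => Y i) (fun i : Fin ℓ => Y (L + i)) =
      fun i : Fin (L + ℓ) => Y i :=
    Fin.append_castAdd_natAdd (f := fun i : Fin (L + ℓ) => Y i)
  rw [avgBlockProb, mul_div_cancel₀ _ (by positivity)]
  calc (G.withStart q).capital 0 Y X L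
      = (G.withStart q).capital 0 (extendTuple b₀ (Fin.append (fun i : Fin L => Y i)
          (fun i : Fin ℓ => Y (L + i)))) (extendTuple a₀ fun i : Fin L => X i) L := by
        refine capital_congr _ 0 (fun i hi => ?_) (fun i hi => (extendTuple_of_lt a₀ X hi).symm)
        rw [hsplit, extendTuple_of_lt b₀ Y hi]
    _ ≤ ∑ w : Fin ℓ → β, (G.withStart q).capital 0 (extendTuple b₀ (Fin.append
          (fun i : Fin L => Y i) w)) (extendTuple a₀ fun i : Fin L => X i) L :=
        single_le_sum (f := fun w => (G.withStart q).capital 0 (extendTuple b₀ (Fin.append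
          (fun i : Fin L => Y i) w)) (extendTuple a₀ fun i : Fin L => X i) L)
          (fun _ _ => capital_nonneg ..) (mem_univ _)
    _ ≤ _ := single_le_sum (f := fun q => ∑ w : Fin ℓ → β, (G.withStart q).capital 0
          (extendTuple b₀ (Fin.append (fun i : Fin L => Y i) w))
          (extendTuple a₀ fun i : Fin L => X i) L)
          (fun _ _ => sum_nonneg fun _ _ => capital_nonneg ..) (mem_univ q)

end FSRG

section Entropy

variable {α β : Type} [Fintype α] [Fintype β]

lemma sum_range_seqBlock (X : ℕ → α) (Y : ℕ → β) (L k : ℕ)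
    (f : (Fin L → β) → (Fin L → α) → ℝ) :
    ∑ i ∈ range k, f (seqBlock Y L i) (seqBlock X L i) =
      ∑ v, ∑ u, (blockCount X Y L k u v : ℝ) * f v u := by
  classical
  rw [← sum_fiberwise' (range k) (fun i => (seqBlock Y L i, seqBlock X L i))
    (fun p => f p.1 p.2), Fintype.sum_prod_type]
  refine sum_congr rfl fun v _ => sum_congr rfl fun u _ => ?_
  rw [sum_const, nsmul_eq_mul, blockCount]
  congr 3
  ext i
  simp only [Prod.ext_iff, funext_iff, seqBlock, eq_comm, and_comm]

lemma condBlockEntropy_eq_div (X : ℕ → α) (Y : ℕ → β) (L k : ℕ) :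
    condBlockEntropy X Y L k =
      -(∑ v, ∑ u, (blockCount X Y L k u v : ℝ) *
          log (blockCount X Y L k u v / ∑ u', (blockCount X Y L k u' v : ℝ))) /
        (k * L * log (Fintype.card α)) := by
  simp only [condBlockEntropy, div_mul_eq_mul_div, ← sum_div]
  ring

lemma condBlockEntropy_nonneg (X : ℕ → α) (Y : ℕ → β) (L k : ℕ) :
    0 ≤ condBlockEntropy X Y L k := by
  have hlog := log_natCast_nonneg (Fintype.card α)
  rw [condBlockEntropy_eq_div]
  refine div_nonneg (neg_nonneg.2 <| sum_nonpos fun v _ => sum_nonpos fun u _ => ?_)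
    (by positivity)
  refine mul_nonpos_of_nonneg_of_nonpos (Nat.cast_nonneg _) (log_nonpos (by positivity) ?_)
  exact div_le_one_of_le₀ (single_le_sum (f := fun u' => (blockCount X Y L k u' v : ℝ))
    (fun _ _ => Nat.cast_nonneg _) (mem_univ u)) (by positivity)

/-- Gibbs' inequality. -/
lemma sum_mul_log_le_sum_mul_log_div {ι : Type} [Fintype ι] {N Q : ι → ℝ}
    (hN : ∀ i, 0 ≤ N i) (hQ : ∀ i, 0 ≤ Q i) (hQN : ∀ i, 0 < N i → 0 < Q i)
    (hQ1 : ∑ i, Q i ≤ 1) :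
    ∑ i, N i * log (Q i) ≤ ∑ i, N i * log (N i / ∑ j, N j) := by
  set M := ∑ j, N j
  have hM : 0 ≤ M := sum_nonneg fun i _ => hN i
  have hterm (i : ι) : N i * log (Q i) - N i * log (N i / M) ≤ Q i * M - N i := by
    rcases (hN i).eq_or_lt with h0 | h0
    · simpa [← h0] using mul_nonneg (hQ i) hM
    have hNM : 0 < N i / M := div_pos h0 (h0.trans_le (single_le_sum (fun j _ => hN j)
      (mem_univ i)))
    have hlog := log_le_sub_one_of_pos (div_pos (hQN i h0) hNM)
    rw [log_div (hQN i h0).ne' hNM.ne'] at hlog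
    calc N i * log (Q i) - N i * log (N i / M) = N i * (log (Q i) - log (N i / M)) := by ring
      _ ≤ N i * (Q i / (N i / M) - 1) := mul_le_mul_of_nonneg_left hlog h0.le
      _ = Q i * M - N i := by field_simp
  have hsum := sum_le_sum fun i (_ : i ∈ univ) => hterm i
  rw [sum_sub_distrib, sum_sub_distrib, ← sum_mul] at hsum
  nlinarith [mul_le_mul_of_nonneg_right hQ1 hM]

lemma condBlockEntropy_le_neg_log_prod (X : ℕ → α) (Y : ℕ → β) (L k : ℕ)
    (Q : (Fin L → β) → (Fin L → α) → ℝ) (hQ : ∀ v u, 0 ≤ Q v u) (hQ1 : ∀ v, ∑ u, Q v u ≤ 1)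
    (hpos : 0 < ∏ i ∈ range k, Q (seqBlock Y L i) (seqBlock X L i)) :
    condBlockEntropy X Y L k ≤
      -log (∏ i ∈ range k, Q (seqBlock Y L i) (seqBlock X L i)) /
        (k * L * log (Fintype.card α)) := by
  have hne := prod_ne_zero_iff.1 hpos.ne'
  rw [condBlockEntropy_eq_div]
  refine div_le_div_of_nonneg_right (neg_le_neg ?_)
    (by have := log_natCast_nonneg (Fintype.card α); positivity)
  rw [log_prod hne, sum_range_seqBlock X Y L k fun v u => log (Q v u)]
  refine sum_le_sum fun v _ =>
    sum_mul_log_le_sum_mul_log_div (fun _ => Nat.cast_nonneg _) (hQ v) (fun u hN => ?_) (hQ1 v)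
  classical
  obtain ⟨i, hi⟩ := card_pos.1 (Nat.cast_pos.1 hN)
  simp only [mem_filter, mem_range] at hi
  obtain ⟨hik, hX, hY⟩ := hi
  have hu : u = seqBlock X L i := funext fun t => (hX t).symm
  have hv : v = seqBlock Y L i := funext fun t => (hY t).symm
  subst hu hv
  exact (hQ _ _).lt_of_ne' (hne i (mem_range.2 hik))

/-- `Real.sSup` of a set that is not bounded above is `0`, so no upper bound is needed. -/
lemma relBlockEntropyAt_nonneg (X : ℕ → α) (Y : ℕ → β) (L : ℕ) :
    0 ≤ relBlockEntropyAt X Y L := by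
  rw [relBlockEntropyAt, liminf_eq]
  exact Real.sSup_nonneg' ⟨0, Eventually.of_forall fun k => condBlockEntropy_nonneg X Y L k,
    le_rfl⟩

end Entropy

namespace FSRG

variable {α β : Type} [Fintype α] [Fintype β] {ℓ m : ℕ}

lemma condBlockEntropy_le_of_one_le_capital (G : FSRG α β ℓ m) {s : ℝ} {Y : ℕ → β}
    {X : ℕ → α} {L k : ℕ} (hα : 1 < Fintype.card α) (hL : 0 < L) (hk : 0 < k)
    (hcap : 1 ≤ G.capital s Y X (k * L)) :
    condBlockEntropy X Y L k ≤
      s + log ((m + 1) * Fintype.card β ^ ℓ) / log (Fintype.card α) / L := by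
  set R : ℝ := (m + 1) * Fintype.card β ^ ℓ
  set c : ℝ := (Fintype.card α : ℝ) ^ s
  have : 0 < Fintype.card β := Fintype.card_pos_iff.2 ⟨Y 0⟩
  have hR : 0 < R := by positivity
  have hc : 0 < c := rpow_pos_of_pos (by positivity) s
  have hlogα : 0 < log (Fintype.card α) := log_pos (by exact_mod_cast hα)
  set p := ∏ i ∈ range k, G.avgBlockProb (X 0) (Y 0) (seqBlock Y L i) (seqBlock X L i)
  have hp : (c ^ (k * L))⁻¹ * (R ^ k)⁻¹ ≤ p := by
    have h0 : (c ^ (k * L))⁻¹ ≤ G.capital 0 Y X (k * L) := by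
      rw [capital_eq_rpow_pow_mul] at hcap
      rwa [inv_le_iff_one_le_mul₀' (by positivity)]
    have h1 : G.capital 0 Y X (k * L) ≤ R ^ k * p := by
      rw [capital_mul_eq_prod]
      refine (prod_le_prod (fun _ _ => capital_nonneg ..)
        (fun j _ => capital_zero_le_mul_avgBlockProb G (X 0) (Y 0) ..)).trans_eq ?_
      rw [← pow_card_mul_prod, card_range]
      rfl
    calc (c ^ (k * L))⁻¹ * (R ^ k)⁻¹ ≤ R ^ k * p * (R ^ k)⁻¹ := by gcongr; exact h0.trans h1
      _ = p := by field_simp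
  have hp0 : 0 < p := lt_of_lt_of_le (by positivity) hp
  calc condBlockEntropy X Y L k ≤ -log p / (k * L * log (Fintype.card α)) :=
        condBlockEntropy_le_neg_log_prod X Y L k _ (G.avgBlockProb_nonneg _ _)
          (fun v => (G.sum_avgBlockProb _ _ v).le) hp0
    _ ≤ -log ((c ^ (k * L))⁻¹ * (R ^ k)⁻¹) / (k * L * log (Fintype.card α)) :=
        div_le_div_of_nonneg_right (neg_le_neg (log_le_log (by positivity) hp)) (by positivity)
    _ = _ := by
        rw [log_mul (by positivity) (by positivity), log_inv, log_inv, log_pow, log_pow,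
          log_rpow (by positivity)]
        field_simp
        push_cast
        ring

lemma Succeeds.frequently_one_le_capital {G : FSRG α β ℓ m} {s : ℝ} {Y : ℕ → β}
    {X : ℕ → α} (hG : G.Succeeds s Y X) (hs : 0 ≤ s) {L : ℕ} (hL : 0 < L) :
    ∃ᶠ k in atTop, 1 ≤ G.capital s Y X (k * L) := by
  intro hsmall
  obtain ⟨K, hK⟩ := eventually_atTop.1 hsmall
  set c : ℝ := (Fintype.card α : ℝ) ^ s
  have hc : 1 ≤ c := one_le_rpow (Nat.one_le_cast.2 (Fintype.card_pos_iff.2 ⟨X 0⟩)) hs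
  have hbound : ∀ᶠ n in atTop, G.capital s Y X n ≤ c ^ L := by
    filter_upwards [eventually_ge_atTop (K * L)] with n hn
    have hk : K ≤ n / L := (Nat.le_div_iff_mul_le hL).2 hn
    calc G.capital s Y X n = G.capital s Y X (n / L * L + n % L) := by rw [Nat.div_add_mod']
      _ ≤ c ^ (n % L) * G.capital s Y X (n / L * L) := capital_add_le ..
      _ ≤ c ^ L * 1 := mul_le_mul (pow_le_pow_right₀ hc (Nat.mod_lt n hL).le)
          (not_le.1 (hK _ hk)).le (capital_nonneg ..) (by positivity)
      _ = c ^ L := mul_one _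
  obtain ⟨C, hC⟩ := (isBoundedUnder_of_eventually_le hbound).bddAbove_range
  obtain ⟨n, hn⟩ := hG C
  exact (hC ⟨n, rfl⟩).not_gt hn

lemma Succeeds.relBlockEntropyAt_le {G : FSRG α β ℓ m} {s : ℝ} {Y : ℕ → β} {X : ℕ → α}
    (hG : G.Succeeds s Y X) (hs : 0 ≤ s) (hα : 1 < Fintype.card α) {L : ℕ} (hL : 0 < L) :
    relBlockEntropyAt X Y L ≤
      s + log ((m + 1) * Fintype.card β ^ ℓ) / log (Fintype.card α) / L :=
  liminf_le_of_frequently_le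
    (((hG.frequently_one_le_capital hs hL).and_eventually (eventually_gt_atTop 0)).mono
      fun _ ⟨hcap, hk⟩ => G.condBlockEntropy_le_of_one_le_capital hα hL hk hcap)
    (isBoundedUnder_of_eventually_ge (Eventually.of_forall fun k =>
      condBlockEntropy_nonneg X Y L k))

def uniform (α β : Type) [Fintype α] [Fintype β] [Nonempty α] : FSRG α β 0 0 where
  δ _ _ _ := 0
  bet _ _ _ := (Fintype.card α : ℚ)⁻¹
  bet_nonneg _ _ _ := by positivity
  bet_sum _ _ := by simp
  q₀ := 0

lemma uniform_succeeds [Nonempty α] (hα : 1 < Fintype.card α) {s : ℝ} (hs : 1 < s)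
    (Y : ℕ → β) (X : ℕ → α) : (uniform α β).Succeeds s Y X := by
  have hcap (n : ℕ) : (uniform α β).capital s Y X n =
      ((Fintype.card α : ℝ) ^ s * (Fintype.card α : ℝ)⁻¹) ^ n := by
    induction n with
    | zero => rfl
    | succ n ih =>
      rw [capital, ih, pow_succ]
      simp only [uniform, Rat.cast_inv, Rat.cast_natCast]
      ring
  have hgrowth : 1 < (Fintype.card α : ℝ) ^ s * (Fintype.card α : ℝ)⁻¹ := by
    have hα' : (1 : ℝ) < Fintype.card α := by exact_mod_cast hα
    rw [← div_eq_mul_inv, one_lt_div (by positivity)]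
    simpa using rpow_lt_rpow_of_exponent_lt hα' hs
  intro C
  obtain ⟨n, hn⟩ := pow_unbounded_of_one_lt C hgrowth
  exact ⟨n, (hcap n).symm ▸ hn⟩

end FSRG

/-- `H(X|Y) ≤ dim_FS^Y(X)`. -/
theorem relBlockEntropy_le_dimFSRel {α β : Type} [Fintype α] [Fintype β]
    (hα : 2 ≤ Fintype.card α) (X : ℕ → α) (Y : ℕ → β) :
    relBlockEntropy X Y ≤ dimFSRel X Y := by
  have hα1 : 1 < Fintype.card α := hα
  have : Nonempty α := ⟨X 0⟩
  refine le_csInf ⟨2, zero_le_two, 0, 0, FSRG.uniform α β,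
    FSRG.uniform_succeeds hα1 one_lt_two Y X⟩ ?_
  rintro s ⟨hs, ℓ, m, G, hG⟩
  have hbdd : BddBelow (Set.range fun L => relBlockEntropyAt X Y (L + 1)) :=
    ⟨0, Set.forall_mem_range.2 fun L => relBlockEntropyAt_nonneg X Y (L + 1)⟩
  have hlim := (tendsto_const_nhds (x := s)).add (tendsto_const_div_atTop_nhds_zero_nat
    (log ((m + 1) * Fintype.card β ^ ℓ) / log (Fintype.card α)))
  rw [add_zero] at hlim
  refine ge_of_tendsto hlim ?_
  filter_upwards [eventually_gt_atTop 0] with L hL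
  obtain ⟨n, rfl⟩ := Nat.exists_eq_add_one_of_ne_zero hL.ne'
  exact (ciInf_le hbdd n).trans (hG.relBlockEntropyAt_le hs hα1 hL)
end

section
/- Let Σ₁, Σ₂ be finite alphabets with |Σ₁| ≥ 2, let ℓ ≥ 1, and set Ω = Σ₁^ℓ × Σ₂^ℓ. Let ε > 0 and let Q be a probability distribution on Ω with Q(x,y) ≥ ε for all (x,y) ∈ Ω. Then for every probability distribution P on Ω with max_{(x,y)∈Ω} |P(x,y) − Q(x,y)| < 2|Ω|ε, one has (1/(ℓ log|Σ₁|)) Σ_{y∈Σ₂^ℓ} Σ_{x∈Σ₁^ℓ} P(x,y)·[log P(x|y) − log Q(x|y)] < 2|Ω|⁴ε, where the sum is over pairs with P(x,y) ≠ 0. -/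
/-!
Splitting `log P(x|y) = log P(x,y) - log P(y)` (and likewise for `Q`) writes the sum as the joint
divergence `∑ P log (P/Q)` minus the marginal one, and the marginal divergence is nonnegative
(`a log (b/a) ≤ b - a`, applied with `a = P(y)`, `b = Q(y)`). Pointwise, once the linear term
`P - Q` is split off, `p log (p/q) - (p - q)` is at most `(p - q)² / (2q)` when `p ≥ q` (from
`t ≤ sinh t`) and at most `q - p` when `p < q`; with `|p - q| < 2|Ω|ε` and `q ≥ ε` both are at
most `2|Ω|²ε`. Summing over `Ω` gives `2|Ω|³ε`, and `ℓ log |Σ₁| ≥ log 2 > 1/|Ω|` finishes.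
-/

open Real

lemma mul_log_sub_log_le_sub {a b : ℝ} (ha : 0 ≤ a) (hb : 0 < b) :
    a * (log b - log a) ≤ b - a := by
  obtain rfl | ha := ha.eq_or_lt
  · simpa using hb.le
  calc a * (log b - log a) = a * log (b / a) := by rw [log_div hb.ne' ha.ne']
    _ ≤ a * (b / a - 1) := by gcongr; exact log_le_sub_one_of_pos (div_pos hb ha)
    _ = b - a := by field_simp

lemma mul_log_sub_log_le_of_le {p q : ℝ} (hq : 0 < q) (hqp : q ≤ p) :
    p * (log p - log q) ≤ (p - q) + (p - q) ^ 2 / (2 * q) := by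
  have hp : 0 < p := hq.trans_le hqp
  have hsinh : log (p / q) ≤ sinh (log (p / q)) :=
    self_le_sinh_iff.2 (log_nonneg ((one_le_div hq).2 hqp))
  rw [sinh_log (div_pos hp hq), log_div hp.ne' hq.ne'] at hsinh
  calc p * (log p - log q) ≤ p * ((p / q - (p / q)⁻¹) / 2) := by gcongr
    _ = (p - q) + (p - q) ^ 2 / (2 * q) := by field_simp; ring

lemma mul_log_sub_log_sub_le {p q ε δ : ℝ} (hp : 0 ≤ p) (hε : 0 < ε) (hεq : ε ≤ q)
    (hpq : |p - q| ≤ δ) (hεδ : 2 * ε ≤ δ) :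
    p * (log p - log q) - (p - q) ≤ δ ^ 2 / (2 * ε) := by
  have hq : 0 < q := hε.trans_le hεq
  have hsq : (p - q) ^ 2 ≤ δ ^ 2 := sq_le_sq' (abs_le.1 hpq).1 (abs_le.1 hpq).2
  rcases le_or_gt q p with hqp | hpq'
  · calc p * (log p - log q) - (p - q) ≤ (p - q) ^ 2 / (2 * q) := by
          linarith [mul_log_sub_log_le_of_le hq hqp]
      _ ≤ δ ^ 2 / (2 * ε) := by gcongr
  · have hlog : p * (log p - log q) ≤ 0 := by
      obtain rfl | hp := hp.eq_or_lt
      · simp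
      exact mul_nonpos_of_nonneg_of_nonpos hp.le (sub_nonpos.2 (log_le_log hp hpq'.le))
    have hδ : δ ≤ δ ^ 2 / (2 * ε) := by
      rw [le_div_iff₀ (by positivity)]; nlinarith
    linarith [(abs_le.1 hpq).1]

lemma mul_log_div_sub_log_div {p a q b : ℝ} (hpa : p ≠ 0 → a ≠ 0) (hq : q ≠ 0) (hb : b ≠ 0) :
    p * (log (p / a) - log (q / b)) = p * (log p - log q) + p * (log b - log a) := by
  by_cases hp : p = 0
  · simp [hp]
  rw [log_div hp (hpa hp), log_div hq hb]; ring

section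
variable {A B : Type*} [Fintype A] [Fintype B]

noncomputable def condKL (P Q : A × B → ℝ) : ℝ :=
  ∑ y, ∑ x, P (x, y) * (log (P (x, y) / ∑ x', P (x', y)) - log (Q (x, y) / ∑ x', Q (x', y)))

lemma condKL_le_sum (P Q : A × B → ℝ) (hP : ∀ ω, 0 ≤ P ω) (hQ : ∀ ω, 0 < Q ω) :
    condKL P Q ≤ ∑ ω, (P ω * (log (P ω) - log (Q ω)) - (P ω - Q ω)) := by
  rcases isEmpty_or_nonempty A with hA | hA
  · simp [condKL]
  rw [Fintype.sum_prod_type_right]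
  refine Finset.sum_le_sum fun y _ => ?_
  set Py := ∑ x, P (x, y)
  set Qy := ∑ x, Q (x, y)
  have hQy : 0 < Qy := Finset.sum_pos (fun x _ => hQ (x, y)) Finset.univ_nonempty
  have hPy : ∀ x, P (x, y) ≠ 0 → Py ≠ 0 := fun x hx =>
    ((lt_of_le_of_ne (hP _) (Ne.symm hx)).trans_le
      (Finset.single_le_sum (fun x' _ => hP (x', y)) (Finset.mem_univ x))).ne'
  calc ∑ x, P (x, y) * (log (P (x, y) / Py) - log (Q (x, y) / Qy))
      = ∑ x, P (x, y) * (log (P (x, y)) - log (Q (x, y))) + Py * (log Qy - log Py) := by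
        simp_rw [mul_log_div_sub_log_div (hPy _) (hQ _).ne' hQy.ne']
        rw [Finset.sum_add_distrib, ← Finset.sum_mul]
    _ ≤ ∑ x, P (x, y) * (log (P (x, y)) - log (Q (x, y))) + (Qy - Py) := by
        gcongr; exact mul_log_sub_log_le_sub (Finset.sum_nonneg fun x _ => hP (x, y)) hQy
    _ = ∑ x, (P (x, y) * (log (P (x, y)) - log (Q (x, y))) - (P (x, y) - Q (x, y))) := by
        simp only [Finset.sum_sub_distrib, Py, Qy]; ring

end

lemma two_le_card_pi_prod_pi {α β : Type*} [Fintype α] [Fintype β] {ℓ : ℕ}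
    (hα : 2 ≤ Fintype.card α) (hβ : 1 ≤ Fintype.card β) (hℓ : 1 ≤ ℓ) :
    2 ≤ Fintype.card ((Fin ℓ → α) × (Fin ℓ → β)) := by
  rw [Fintype.card_prod, Fintype.card_fun, Fintype.card_fun, Fintype.card_fin]
  exact le_mul_of_le_of_one_le (hα.trans (Nat.le_self_pow (by omega) _)) (Nat.one_le_pow _ _ hβ)

theorem kl_cond_divergence_small_general {α β : Type} [Fintype α] [Fintype β]
    (hα : 2 ≤ Fintype.card α) (hβ : 1 ≤ Fintype.card β)
    (ℓ : ℕ) (hℓ : 1 ≤ ℓ) (ε : ℝ) (hε : 0 < ε)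
    (Q : (Fin ℓ → α) × (Fin ℓ → β) → ℝ)
    (hQε : ∀ ω, ε ≤ Q ω)
    (P : (Fin ℓ → α) × (Fin ℓ → β) → ℝ)
    (hP0 : ∀ ω, 0 ≤ P ω)
    (hclose : ∀ ω, |P ω - Q ω| <
      2 * (Fintype.card ((Fin ℓ → α) × (Fin ℓ → β)) : ℝ) * ε) :
    (1 / (ℓ * Real.log (Fintype.card α))) *
        ∑ y : Fin ℓ → β, ∑ x : Fin ℓ → α,
          P (x, y) * (Real.log (P (x, y) / ∑ x' : Fin ℓ → α, P (x', y)) -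
            Real.log (Q (x, y) / ∑ x' : Fin ℓ → α, Q (x', y))) <
      2 * (Fintype.card ((Fin ℓ → α) × (Fin ℓ → β)) : ℝ) ^ 4 * ε := by
  set n : ℝ := (Fintype.card ((Fin ℓ → α) × (Fin ℓ → β)) : ℝ)
  have hn : 2 ≤ n := Nat.ofNat_le_cast.2 (two_le_card_pi_prod_pi hα hβ hℓ)
  have hL : log 2 ≤ ℓ * log (Fintype.card α) := by
    have : log 2 ≤ log (Fintype.card α) := log_le_log two_pos (by exact_mod_cast hα)
    nlinarith [log_pos one_lt_two, (Nat.one_le_cast (α := ℝ)).2 hℓ]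
  have hS : condKL P Q ≤ 2 * n ^ 3 * ε := by
    calc condKL P Q ≤ ∑ ω, (P ω * (log (P ω) - log (Q ω)) - (P ω - Q ω)) :=
          condKL_le_sum P Q hP0 fun ω => hε.trans_le (hQε ω)
      _ ≤ ∑ _ω, (2 * n * ε) ^ 2 / (2 * ε) := Finset.sum_le_sum fun ω _ =>
          mul_log_sub_log_sub_le (hP0 ω) hε (hQε ω) (hclose ω).le (by nlinarith)
      _ = n * ((2 * n * ε) ^ 2 / (2 * ε)) := by
          rw [Finset.sum_const, Finset.card_univ, nsmul_eq_mul]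
      _ = 2 * n ^ 3 * ε := by field_simp
  change 1 / (ℓ * log (Fintype.card α)) * condKL P Q < _
  have hL0 : 0 < (ℓ : ℝ) * log (Fintype.card α) := (log_pos one_lt_two).trans_le hL
  rw [one_div_mul_eq_div, div_lt_iff₀ hL0]
  have hnlog : 1 < n * log 2 := by nlinarith [log_two_gt_d9]
  calc condKL P Q ≤ 2 * n ^ 3 * ε * 1 := by linarith
    _ < 2 * n ^ 3 * ε * (n * log 2) := by gcongr
    _ = 2 * n ^ 4 * ε * log 2 := by ring
    _ ≤ 2 * n ^ 4 * ε * (ℓ * log (Fintype.card α)) := by gcongr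

/-- if `Q` is a probability distribution on `Ω = Σ₁^ℓ × Σ₂^ℓ` bounded below by
`ε` and `P` is any probability distribution with `max |P − Q| < 2|Ω|ε`, then the normalized
sum of `P(x,y)·[log P(x|y) − log Q(x|y)]` is below `2|Ω|⁴ε`.  (Terms with `P(x,y) = 0` vanish
since they are multiplied by `P(x,y)`.) -/
theorem kl_cond_divergence_small {α β : Type} [Fintype α] [Fintype β]
    (hα : 2 ≤ Fintype.card α) (hβ : 1 ≤ Fintype.card β)
    (ℓ : ℕ) (hℓ : 1 ≤ ℓ) (ε : ℝ) (hε : 0 < ε)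
    (Q : (Fin ℓ → α) × (Fin ℓ → β) → ℝ)
    (hQsum : ∑ ω, Q ω = 1) (hQε : ∀ ω, ε ≤ Q ω)
    (P : (Fin ℓ → α) × (Fin ℓ → β) → ℝ)
    (hP0 : ∀ ω, 0 ≤ P ω) (hP1 : ∀ ω, P ω ≤ 1) (hPsum : ∑ ω, P ω = 1)
    (hclose : ∀ ω, |P ω - Q ω| <
      2 * (Fintype.card ((Fin ℓ → α) × (Fin ℓ → β)) : ℝ) * ε) :
    (1 / (ℓ * Real.log (Fintype.card α))) *
        ∑ y : Fin ℓ → β, ∑ x : Fin ℓ → α,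
          P (x, y) * (Real.log (P (x, y) / ∑ x' : Fin ℓ → α, P (x', y)) -
            Real.log (Q (x, y) / ∑ x' : Fin ℓ → α, Q (x', y))) <
      2 * (Fintype.card ((Fin ℓ → α) × (Fin ℓ → β)) : ℝ) ^ 4 * ε :=
  kl_cond_divergence_small_general hα hβ ℓ hℓ ε hε Q hQε P hP0 hclose
end

section
/- Let Y₀, Y₁, …, Y_{n−1} be infinite sequences over a finite alphabet Σ with |Σ| ≥ 2, and let σ be any permutation of {0,1,…,n−1}. Then dim_FS(Y₀ × Y₁ × ⋯ × Y_{n−1}) = dim_FS(Y_{σ(0)} × Y_{σ(1)} × ⋯ × Y_{σ(n−1)}) = dim_FS(Y_{σ(0)} ⊕ Y_{σ(1)} ⊕ ⋯ ⊕ Y_{σ(n−1)}) = dim_FS(Y₀ ⊕ Y₁ ⊕ ⋯ ⊕ Y_{n−1}). -/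
open Filter

/-!
Read in blocks of length `n`, the interleaving `Y₀ ⊕ ⋯ ⊕ Y_{n-1}` is the product sequence, and
permuting the factors of the product is a bijection of its alphabet, which a gambler absorbs by
relabelling. So it suffices that, for every `s`, a finite-state `s`-gale succeeds on a sequence
`Z` iff one succeeds on its sequence of `n`-blocks; note `(|Σ|^n)^s = (|Σ|^s)^n`.
A gambler on `Z` becomes one on blocks by multiplying its bets across a block; its capital at
block boundaries is unchanged, and inside a block it grows by a bounded factor. Conversely, a
gambler on blocks is played letter by letter, betting on each letter the conditional probability
of its block bet given the letters of the block read so far: over a block these bets multiply to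
the block bet, so at block boundaries the letter gambler has at least the block gambler's capital.
-/

/-- `FSG` with an arbitrary type of states in place of `Fin (m + 1)`. -/
structure FSGambler (Q α : Type) [Fintype α] where
  δ : Q → α → Q
  bet : Q → α → ℚ
  bet_nonneg : ∀ q a, 0 ≤ bet q a
  bet_sum : ∀ q, ∑ a, bet q a = 1
  q₀ : Q

namespace FSGambler

variable {Q α : Type} [Fintype α]

def state (G : FSGambler Q α) (X : ℕ → α) : ℕ → Q
  | 0 => G.q₀
  | k + 1 => G.δ (G.state X k) (X k)

noncomputable def capital (G : FSGambler Q α) (s : ℝ) (X : ℕ → α) : ℕ → ℝ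
  | 0 => 1
  | k + 1 => (Fintype.card α : ℝ) ^ s * G.bet (G.state X k) (X k) * G.capital s X k

def Succeeds (G : FSGambler Q α) (s : ℝ) (X : ℕ → α) : Prop :=
  ∀ C : ℝ, ∃ k, C < G.capital s X k

variable (G : FSGambler Q α)

lemma capital_nonneg (s : ℝ) (X : ℕ → α) (k : ℕ) : 0 ≤ G.capital s X k := by
  induction k with
  | zero => simp [capital]
  | succ k ih =>
    have : (0 : ℝ) ≤ G.bet (G.state X k) (X k) := by exact_mod_cast G.bet_nonneg _ _
    rw [capital]
    positivity

end FSGambler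

namespace FSG

variable {α : Type} [Fintype α] {m : ℕ}

def toFSGambler (G : FSG α m) : FSGambler (Fin (m + 1)) α :=
  ⟨G.δ, G.bet, G.bet_nonneg, G.bet_sum, G.q₀⟩

lemma state_toFSGambler (G : FSG α m) (X : ℕ → α) (k : ℕ) :
    G.toFSGambler.state X k = G.state X k := by
  induction k with
  | zero => rfl
  | succ k ih => simp only [FSGambler.state, FSG.state, ← ih]; rfl

lemma capital_toFSGambler (G : FSG α m) (s : ℝ) (X : ℕ → α) (k : ℕ) :
    G.toFSGambler.capital s X k = G.capital s X k := by
  induction k with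
  | zero => rfl
  | succ k ih => simp only [FSGambler.capital, FSG.capital, ih, state_toFSGambler]; rfl

end FSG

namespace FSGambler

variable {Q α : Type} [Fintype Q] [Fintype α] (G : FSGambler Q α)

noncomputable def stateEquiv : Q ≃ Fin (Fintype.card Q - 1 + 1) :=
  (Fintype.equivFin Q).trans
    (finCongr (Nat.sub_add_cancel (Fintype.card_pos_iff.2 ⟨G.q₀⟩)).symm)

noncomputable def toFSG : FSG α (Fintype.card Q - 1) where
  δ p a := G.stateEquiv (G.δ (G.stateEquiv.symm p) a)
  bet p a := G.bet (G.stateEquiv.symm p) a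
  bet_nonneg p := G.bet_nonneg (G.stateEquiv.symm p)
  bet_sum p := G.bet_sum (G.stateEquiv.symm p)
  q₀ := G.stateEquiv G.q₀

lemma state_toFSG (X : ℕ → α) (k : ℕ) : G.toFSG.state X k = G.stateEquiv (G.state X k) := by
  induction k with
  | zero => rfl
  | succ k ih => simp only [FSG.state, state, ih]; simp [toFSG]

lemma capital_toFSG (s : ℝ) (X : ℕ → α) (k : ℕ) : G.toFSG.capital s X k = G.capital s X k := by
  induction k with
  | zero => rfl
  | succ k ih => simp only [FSG.capital, capital, ih, state_toFSG]; simp [toFSG]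

end FSGambler

def FSSucceeds {α : Type} [Fintype α] (s : ℝ) (X : ℕ → α) : Prop :=
  ∃ (Q : Type) (_ : Fintype Q) (G : FSGambler Q α), G.Succeeds s X

lemma exists_fsg_succeeds_iff {α : Type} [Fintype α] (s : ℝ) (X : ℕ → α) :
    (∃ (m : ℕ) (G : FSG α m), G.Succeeds s X) ↔ FSSucceeds s X := by
  constructor
  · rintro ⟨m, G, hG⟩
    exact ⟨_, inferInstance, G.toFSGambler, fun C => by simpa [FSG.capital_toFSGambler] using hG C⟩
  · rintro ⟨Q, _, G, hG⟩
    exact ⟨_, G.toFSG, fun C => by simpa [FSGambler.capital_toFSG] using hG C⟩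

lemma dimFS_congr {α γ : Type} [Fintype α] [Fintype γ] {X : ℕ → α} {Y : ℕ → γ}
    (h : ∀ s, FSSucceeds s X ↔ FSSucceeds s Y) : dimFS X = dimFS Y := by
  simp only [dimFS, exists_fsg_succeeds_iff, h]

namespace FSGambler

variable {Q α γ : Type} [Fintype α] [Fintype γ]

def relabel (G : FSGambler Q α) (φ : α ≃ γ) : FSGambler Q γ where
  δ q c := G.δ q (φ.symm c)
  bet q c := G.bet q (φ.symm c)
  bet_nonneg q c := G.bet_nonneg q (φ.symm c)
  bet_sum q := (φ.symm.sum_comp (G.bet q)).trans (G.bet_sum q)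
  q₀ := G.q₀

lemma state_relabel (G : FSGambler Q α) (φ : α ≃ γ) (X : ℕ → α) (k : ℕ) :
    (G.relabel φ).state (φ ∘ X) k = G.state X k := by
  induction k with
  | zero => rfl
  | succ k ih => rw [state, ih]; simp [relabel, state]

lemma capital_relabel (G : FSGambler Q α) (φ : α ≃ γ) (s : ℝ) (X : ℕ → α) (k : ℕ) :
    (G.relabel φ).capital s (φ ∘ X) k = G.capital s X k := by
  induction k with
  | zero => rfl
  | succ k ih =>
    rw [capital, capital, ih, state_relabel, Fintype.card_congr φ]; simp [relabel]

end FSGambler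

lemma FSSucceeds.comp_equiv {α γ : Type} [Fintype α] [Fintype γ] {s : ℝ} {X : ℕ → α}
    (h : FSSucceeds s X) (φ : α ≃ γ) : FSSucceeds s (φ ∘ X) := by
  obtain ⟨Q, _, G, hG⟩ := h
  exact ⟨Q, inferInstance, G.relabel φ, fun C => by simpa [FSGambler.capital_relabel] using hG C⟩

lemma dimFS_comp_equiv {α γ : Type} [Fintype α] [Fintype γ] (φ : α ≃ γ) (X : ℕ → α) :
    dimFS (φ ∘ X) = dimFS X :=
  dimFS_congr fun _ =>
    ⟨fun h => by simpa [← Function.comp_assoc] using h.comp_equiv φ.symm, fun h => h.comp_equiv φ⟩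

def blocks {α : Type} (n : ℕ) (Z : ℕ → α) : ℕ → Fin n → α := fun k j => Z (n * k + j)

lemma card_fun_fin_rpow (α : Type) [Fintype α] (n : ℕ) (s : ℝ) :
    (Fintype.card (Fin n → α) : ℝ) ^ s = ((Fintype.card α : ℝ) ^ s) ^ n := by
  rw [Real.rpow_pow_comm (Nat.cast_nonneg _)]
  simp

lemma tail_window {α : Type} (X : ℕ → α) (p L : ℕ) :
    Fin.tail (fun j : Fin (L + 1) => X (p + j)) = fun j : Fin L => X (p + 1 + j) := by
  ext j
  simp [Fin.tail, add_assoc, add_comm 1]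

namespace FSGambler

variable {Q α : Type} [Fintype α]

def runWord (G : FSGambler Q α) : {L : ℕ} → Q → (Fin L → α) → Q
  | 0, q, _ => q
  | _ + 1, q, u => G.runWord (G.δ q (u 0)) (Fin.tail u)

def wordBet (G : FSGambler Q α) : {L : ℕ} → Q → (Fin L → α) → ℚ
  | 0, _, _ => 1
  | _ + 1, q, u => G.bet q (u 0) * G.wordBet (G.δ q (u 0)) (Fin.tail u)

variable (G : FSGambler Q α)

lemma wordBet_nonneg {L : ℕ} (q : Q) (u : Fin L → α) : 0 ≤ G.wordBet q u := by
  induction L generalizing q with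
  | zero => simp [wordBet]
  | succ L ih => exact mul_nonneg (G.bet_nonneg _ _) (ih _ _)

lemma sum_wordBet (L : ℕ) (q : Q) : ∑ u : Fin L → α, G.wordBet q u = 1 := by
  induction L generalizing q with
  | zero => simp [wordBet]
  | succ L ih =>
    rw [← (Fin.consEquiv fun _ => α).sum_comp, Fintype.sum_prod_type]
    change ∑ a, ∑ t, G.wordBet q (Fin.cons a t : Fin (L + 1) → α) = 1
    simp [wordBet, ← Finset.mul_sum, ih, G.bet_sum]

lemma wordBet_le_one {L : ℕ} (q : Q) (u : Fin L → α) : G.wordBet q u ≤ 1 :=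
  (Finset.single_le_sum (fun v _ => G.wordBet_nonneg q v) (Finset.mem_univ u)).trans_eq
    (G.sum_wordBet L q)

lemma state_add (X : ℕ → α) (p L : ℕ) :
    G.state X (p + L) = G.runWord (G.state X p) (fun j : Fin L => X (p + j)) := by
  induction L generalizing p with
  | zero => rfl
  | succ L ih =>
    rw [runWord, tail_window, ← add_assoc, add_right_comm, ih]
    rfl

lemma capital_add (s : ℝ) (X : ℕ → α) (p L : ℕ) :
    G.capital s X (p + L) =
      ((Fintype.card α : ℝ) ^ s) ^ L * G.wordBet (G.state X p) (fun j : Fin L => X (p + j)) *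
        G.capital s X p := by
  induction L generalizing p with
  | zero => simp [wordBet]
  | succ L ih =>
    rw [wordBet, tail_window, ← add_assoc, add_right_comm, ih, capital]
    simp only [Fin.val_zero, add_zero, Rat.cast_mul]
    rw [state]
    ring

lemma capital_add_le (s : ℝ) (X : ℕ → α) (p L : ℕ) :
    G.capital s X (p + L) ≤ ((Fintype.card α : ℝ) ^ s) ^ L * G.capital s X p := by
  rw [capital_add]
  have hb : (G.wordBet (G.state X p) (fun j : Fin L => X (p + j)) : ℝ) ≤ 1 := by
    exact_mod_cast G.wordBet_le_one _ _
  have hc : (0 : ℝ) ≤ ((Fintype.card α : ℝ) ^ s) ^ L := by positivity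
  simpa using mul_le_mul_of_nonneg_right (mul_le_mul_of_nonneg_left hb hc)
    (G.capital_nonneg s X p)

def block (n : ℕ) : FSGambler Q (Fin n → α) where
  δ := G.runWord
  bet := G.wordBet
  bet_nonneg := G.wordBet_nonneg
  bet_sum := G.sum_wordBet n
  q₀ := G.q₀

lemma state_block (n : ℕ) (Z : ℕ → α) (k : ℕ) :
    (G.block n).state (blocks n Z) k = G.state Z (n * k) := by
  induction k with
  | zero => rfl
  | succ k ih => rw [state, ih, Nat.mul_succ, state_add]; rfl

lemma capital_block (n : ℕ) (s : ℝ) (Z : ℕ → α) (k : ℕ) :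
    (G.block n).capital s (blocks n Z) k = G.capital s Z (n * k) := by
  induction k with
  | zero => rfl
  | succ k ih =>
    rw [capital, ih, state_block, Nat.mul_succ, capital_add, card_fun_fin_rpow]
    rfl

end FSGambler

lemma FSSucceeds.to_blocks {α : Type} [Fintype α] {s : ℝ} {Z : ℕ → α} (h : FSSucceeds s Z)
    {n : ℕ} (hn : 0 < n) : FSSucceeds s (blocks n Z) := by
  obtain ⟨Q, _, G, hG⟩ := h
  refine ⟨Q, inferInstance, G.block n, fun C => ?_⟩
  set M := max 1 ((Fintype.card α : ℝ) ^ s)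
  have hM : 0 < M ^ n := pow_pos (lt_max_of_lt_left one_pos) n
  obtain ⟨u, hu⟩ := hG (M ^ n * C)
  have hpow : ((Fintype.card α : ℝ) ^ s) ^ (u % n) ≤ M ^ n :=
    (pow_le_pow_left₀ (by positivity) (le_max_right _ _) _).trans
      (pow_le_pow_right₀ (le_max_left _ _) (Nat.mod_lt u hn).le)
  have hcap : G.capital s Z u ≤ M ^ n * G.capital s Z (n * (u / n)) := by
    conv_lhs => rw [← Nat.div_add_mod u n]
    exact (G.capital_add_le s Z _ _).trans
      (mul_le_mul_of_nonneg_right hpow (G.capital_nonneg s Z _))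
  exact ⟨u / n, by rw [G.capital_block]; exact lt_of_mul_lt_mul_left (hu.trans_le hcap) hM.le⟩

lemma update_self_of_agree {α : Type} {n : ℕ} {w W : Fin n → α} {j : Fin n}
    (h : ∀ i : Fin n, i < j → w i = W i) {i : Fin n} (hi : i ≤ j) :
    Function.update w j (W j) i = W i := by
  rcases hi.lt_or_eq with hi | rfl
  · rw [Function.update_of_ne hi.ne]
    exact h i hi
  · exact Function.update_self ..

namespace FSGambler

variable {Q α : Type} [Fintype α] [DecidableEq α] {n : ℕ} (G : FSGambler Q (Fin n → α))

def prefixMass (q : Q) (j : ℕ) (w : Fin n → α) : ℚ :=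
  ∑ u with ∀ i : Fin n, (i : ℕ) < j → u i = w i, G.bet q u

lemma prefixMass_congr (q : Q) (j : ℕ) {w w' : Fin n → α}
    (h : ∀ i : Fin n, (i : ℕ) < j → w i = w' i) : G.prefixMass q j w = G.prefixMass q j w' := by
  unfold prefixMass
  congr 1
  ext u
  simp only [Finset.mem_filter, Finset.mem_univ, true_and]
  exact forall₂_congr fun i hi => by rw [h i hi]

lemma prefixMass_nonneg (q : Q) (j : ℕ) (w : Fin n → α) : 0 ≤ G.prefixMass q j w :=
  Finset.sum_nonneg fun u _ => G.bet_nonneg q u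

lemma prefixMass_zero (q : Q) (w : Fin n → α) : G.prefixMass q 0 w = 1 := by
  simp [prefixMass, G.bet_sum]

lemma prefixMass_self (q : Q) (w : Fin n → α) : G.prefixMass q n w = G.bet q w := by
  have : ∀ u : Fin n → α, (∀ i : Fin n, (i : ℕ) < n → u i = w i) ↔ u = w :=
    fun u => ⟨fun h => funext fun i => h i i.isLt, fun h i _ => h ▸ rfl⟩
  rw [prefixMass, Finset.filter_congr fun u _ => this u, Finset.filter_eq',
    if_pos (Finset.mem_univ _), Finset.sum_singleton]

lemma sum_prefixMass_update (q : Q) (j : Fin n) (w : Fin n → α) :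
    ∑ x, G.prefixMass q (j + 1) (Function.update w j x) = G.prefixMass q j w := by
  rw [prefixMass, ← Finset.sum_fiberwise _ (fun u : Fin n → α => u j) (G.bet q)]
  refine Fintype.sum_congr _ _ fun x => ?_
  rw [prefixMass, Finset.filter_filter]
  congr 1
  ext u
  simp only [Finset.mem_filter, Finset.mem_univ, true_and]
  constructor
  · intro h
    refine ⟨fun i hi => ?_, by simpa using h j (by omega)⟩
    simpa [Function.update_of_ne (Fin.ne_of_lt hi)] using h i (by omega)
  · rintro ⟨h, rfl⟩ i hi
    exact (update_self_of_agree (fun i hi => (h i hi).symm) (Nat.lt_succ_iff.1 hi)).symm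

def condBet (q : Q) (j : Fin n) (w : Fin n → α) (x : α) : ℚ :=
  if G.prefixMass q j w = 0 then (Fintype.card α : ℚ)⁻¹
  else G.prefixMass q (j + 1) (Function.update w j x) / G.prefixMass q j w

lemma condBet_nonneg (q : Q) (j : Fin n) (w : Fin n → α) (x : α) : 0 ≤ G.condBet q j w x := by
  unfold condBet
  split_ifs
  · positivity
  · exact div_nonneg (G.prefixMass_nonneg _ _ _) (G.prefixMass_nonneg _ _ _)

lemma sum_condBet [Nonempty α] (q : Q) (j : Fin n) (w : Fin n → α) :
    ∑ x, G.condBet q j w x = 1 := by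
  unfold condBet
  split_ifs with h
  · simp
  · rw [← Finset.sum_div, G.sum_prefixMass_update, div_self h]

lemma prefixMass_update_eq_condBet_mul (q : Q) (j : Fin n) (w : Fin n → α) (x : α) :
    G.prefixMass q (j + 1) (Function.update w j x) = G.condBet q j w x * G.prefixMass q j w := by
  unfold condBet
  split_ifs with h
  · rw [h, mul_zero]
    refine le_antisymm ?_ (G.prefixMass_nonneg _ _ _)
    rw [← h, ← G.sum_prefixMass_update q j w]
    exact Finset.single_le_sum (fun y _ => G.prefixMass_nonneg q (j + 1) _) (Finset.mem_univ x)
  · rw [div_mul_cancel₀ _ h]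

/-- `G` played letter by letter. A state holds `G`'s state at the start of the current block,
the position `j` in the block, and a word whose first `j` letters are those read so far. -/
noncomputable def unblock (hn : 0 < n) [Nonempty α] :
    FSGambler (Q × Fin n × (Fin n → α)) α where
  δ p x :=
    let w := Function.update p.2.2 p.2.1 x
    if h : (p.2.1 : ℕ) + 1 < n then (p.1, ⟨p.2.1 + 1, h⟩, w) else (G.δ p.1 w, ⟨0, hn⟩, w)
  bet p := G.condBet p.1 p.2.1 p.2.2
  bet_nonneg p := G.condBet_nonneg p.1 p.2.1 p.2.2
  bet_sum p := G.sum_condBet p.1 p.2.1 p.2.2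
  q₀ := (G.q₀, ⟨0, hn⟩, fun _ => Classical.arbitrary α)

variable [Nonempty α] (hn : 0 < n) (Z : ℕ → α)

lemma state_unblock_add {k : ℕ} {w₀ : Fin n → α}
    (h₀ : (G.unblock hn).state Z (n * k) = (G.state (blocks n Z) k, ⟨0, hn⟩, w₀))
    (j : ℕ) (hj : j < n) :
    ∃ w, (G.unblock hn).state Z (n * k + j) = (G.state (blocks n Z) k, ⟨j, hj⟩, w) ∧
      ∀ i : Fin n, (i : ℕ) < j → w i = blocks n Z k i := by
  induction j with
  | zero => exact ⟨w₀, h₀, by simp⟩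
  | succ j ih =>
    obtain ⟨w, hw, hagree⟩ := ih (by omega)
    refine ⟨Function.update w ⟨j, by omega⟩ (blocks n Z k ⟨j, by omega⟩), ?_, ?_⟩
    · rw [← add_assoc, state, hw]
      simp [unblock, hj, blocks]
    · exact fun i hi => update_self_of_agree hagree (Nat.lt_succ_iff.1 hi)

lemma state_unblock_mul (k : ℕ) :
    ∃ w, (G.unblock hn).state Z (n * k) = (G.state (blocks n Z) k, ⟨0, hn⟩, w) := by
  induction k with
  | zero => exact ⟨_, rfl⟩
  | succ k ih =>
    obtain ⟨w₀, h₀⟩ := ih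
    obtain ⟨w, hw, hagree⟩ := G.state_unblock_add hn Z h₀ (n - 1) (by omega)
    have hlast : Function.update w ⟨n - 1, by omega⟩ (Z (n * k + (n - 1))) = blocks n Z k :=
      funext fun i => update_self_of_agree (W := blocks n Z k) hagree (Nat.le_sub_one_of_lt i.isLt)
    refine ⟨blocks n Z k, ?_⟩
    rw [show n * (k + 1) = n * k + (n - 1) + 1 by rw [Nat.mul_succ]; omega, state, hw]
    simp only [unblock, show ¬(n - 1 + 1 < n) by omega, dite_false]
    rw [hlast]
    rfl

lemma capital_unblock_add (s : ℝ) {k : ℕ} {w₀ : Fin n → α}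
    (h₀ : (G.unblock hn).state Z (n * k) = (G.state (blocks n Z) k, ⟨0, hn⟩, w₀))
    (j : ℕ) (hj : j ≤ n) :
    ((Fintype.card α : ℝ) ^ s) ^ j * G.prefixMass (G.state (blocks n Z) k) j (blocks n Z k) *
      (G.unblock hn).capital s Z (n * k) ≤ (G.unblock hn).capital s Z (n * k + j) := by
  induction j with
  | zero => simp [prefixMass_zero]
  | succ j ih =>
    set q := G.state (blocks n Z) k
    obtain ⟨w, hw, hagree⟩ := G.state_unblock_add hn Z h₀ j (by omega)
    have hmass : G.prefixMass q (j + 1) (blocks n Z k) =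
        G.condBet q ⟨j, by omega⟩ w (Z (n * k + j)) * G.prefixMass q j (blocks n Z k) := by
      rw [← G.prefixMass_congr q j hagree, ← G.prefixMass_update_eq_condBet_mul]
      exact G.prefixMass_congr q _ fun i hi =>
        (update_self_of_agree hagree (Nat.lt_succ_iff.1 hi)).symm
    set c := (Fintype.card α : ℝ) ^ s
    have hbet : 0 ≤ c * G.condBet q ⟨j, by omega⟩ w (Z (n * k + j)) := by
      have := G.condBet_nonneg q ⟨j, by omega⟩ w (Z (n * k + j))
      positivity
    rw [← add_assoc, capital, hw, hmass]
    calc _ = c * G.condBet q ⟨j, by omega⟩ w (Z (n * k + j)) *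
          (c ^ j * G.prefixMass q j (blocks n Z k) * (G.unblock hn).capital s Z (n * k)) := by
          push_cast; ring
      _ ≤ _ := mul_le_mul_of_nonneg_left (ih (by omega)) hbet

lemma capital_le_capital_unblock (s : ℝ) (k : ℕ) :
    G.capital s (blocks n Z) k ≤ (G.unblock hn).capital s Z (n * k) := by
  induction k with
  | zero => simp [capital]
  | succ k ih =>
    obtain ⟨w₀, h₀⟩ := G.state_unblock_mul hn Z k
    have hmass : (0 : ℝ) ≤ ((Fintype.card α : ℝ) ^ s) ^ n *
        G.prefixMass (G.state (blocks n Z) k) n (blocks n Z k) := by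
      have := G.prefixMass_nonneg (G.state (blocks n Z) k) n (blocks n Z k)
      positivity
    rw [capital, card_fun_fin_rpow, Nat.mul_succ, ← prefixMass_self]
    exact (mul_le_mul_of_nonneg_left ih hmass).trans (G.capital_unblock_add hn Z s h₀ n le_rfl)

end FSGambler

lemma FSSucceeds.of_blocks {α : Type} [Fintype α] {s : ℝ} {Z : ℕ → α} {n : ℕ} (hn : 0 < n)
    (h : FSSucceeds s (blocks n Z)) : FSSucceeds s Z := by
  classical
  have : Nonempty α := ⟨Z 0⟩
  obtain ⟨Q, _, G, hG⟩ := h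
  refine ⟨_, inferInstance, G.unblock hn, fun C => ?_⟩
  obtain ⟨k, hk⟩ := hG C
  exact ⟨n * k, hk.trans_le (G.capital_le_capital_unblock hn Z s k)⟩

lemma dimFS_blocks {α : Type} [Fintype α] {n : ℕ} (hn : 0 < n) (Z : ℕ → α) :
    dimFS (blocks n Z) = dimFS Z :=
  dimFS_congr fun _ => ⟨FSSucceeds.of_blocks hn, fun h => h.to_blocks hn⟩

lemma prodSeq_eq_blocks_interleave {α : Type} {n : ℕ} (hn : 0 < n) (Ys : Fin n → ℕ → α) :
    prodSeq Ys = blocks n (interleave hn Ys) := by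
  ext k j
  have hmod : (n * k + j) % n = j := by rw [Nat.mul_add_mod, Nat.mod_eq_of_lt j.isLt]
  have hdiv : (n * k + j) / n = k := by rw [Nat.mul_add_div hn, Nat.div_eq_of_lt j.isLt, add_zero]
  simp only [prodSeq, blocks, interleave, hmod, hdiv]

lemma dimFS_prodSeq_eq_interleave {α : Type} [Fintype α] {n : ℕ} (hn : 0 < n)
    (Ys : Fin n → ℕ → α) : dimFS (prodSeq Ys) = dimFS (interleave hn Ys) := by
  rw [prodSeq_eq_blocks_interleave hn, dimFS_blocks hn]

lemma dimFS_prodSeq_comp_equiv {α ι ι' : Type} [Fintype α] [Fintype ι] [DecidableEq ι]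
    [Fintype ι'] [DecidableEq ι'] (e : ι' ≃ ι) (Ys : ι → ℕ → α) :
    dimFS (prodSeq (fun i => Ys (e i))) = dimFS (prodSeq Ys) :=
  dimFS_comp_equiv (e.symm.arrowCongr (.refl α)) (prodSeq Ys)

theorem dimFS_prodSeq_interleave_perm_general {α : Type} [Fintype α]
    {n : ℕ} (hn : 0 < n) (Ys : Fin n → ℕ → α) (σ : Equiv.Perm (Fin n)) :
    dimFS (prodSeq Ys) = dimFS (prodSeq (fun i => Ys (σ i))) ∧
    dimFS (prodSeq Ys) = dimFS (interleave hn (fun i => Ys (σ i))) ∧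
    dimFS (prodSeq Ys) = dimFS (interleave hn Ys) := by
  have hperm := dimFS_prodSeq_comp_equiv σ Ys
  refine ⟨hperm.symm, ?_, dimFS_prodSeq_eq_interleave hn Ys⟩
  rw [← hperm, dimFS_prodSeq_eq_interleave]

/-- the finite-state dimensions of the product sequence, any permuted product
sequence, any permuted interleaving, and the interleaving of `Y₀, …, Y_{n-1}` all coincide. -/
theorem dimFS_prodSeq_interleave_perm {α : Type} [Fintype α] (hα : 2 ≤ Fintype.card α)
    {n : ℕ} (hn : 0 < n) (Ys : Fin n → ℕ → α) (σ : Equiv.Perm (Fin n)) :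
    dimFS (prodSeq Ys) = dimFS (prodSeq (fun i => Ys (σ i))) ∧
    dimFS (prodSeq Ys) = dimFS (interleave hn (fun i => Ys (σ i))) ∧
    dimFS (prodSeq Ys) = dimFS (interleave hn Ys) :=
  dimFS_prodSeq_interleave_perm_general hn Ys σ
end

section
/- There exists an infinite sequence X over the binary alphabet Σ = {0,1} such that dim_FS(X) > (1/2)·( dim_FS(A_{2,0}) + dim_FS^{A_{2,0}}(A_{2,1}) ); in fact one can take X with dim_FS(X) = 1/2, dim_FS(A_{2,0}) = 0 and dim_FS^{A_{2,0}}(A_{2,1}) = 0. -/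
open Filter

/-!
Cut the pair indices into blocks `[t k, t (k+1))` with `t (k+1) = (k+1) (t k + 1)`. In block `k`
only the track `A_{2, k mod 2}` carries information: the other track is set to `0`, and each bit of
the active track is chosen so as not to increase a fixed convex combination of the martingales
(`1`-gales) of all binary finite-state gamblers. Along `X` that combination grows at most like
`2^(n/2)`, so no finite-state `s`-gale with `s ≤ 1/2` succeeds on `X`.

Conversely each track is `0` outside the first `t k` of its first `t (k+1)` symbols for every other
`k`, so a gambler biased towards `0` succeeds on it for every `s > 0`. Running that gambler on the odd
positions of `X` and staying neutral on the even ones succeeds on `X` for every `s > 1/2`, and an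
oracle gambler may simply ignore its oracle.
-/

open Finset

def blockEnd : ℕ → ℕ
  | 0 => 0
  | k + 1 => (k + 1) * (blockEnd k + 1)

lemma blockEnd_lt_succ (k : ℕ) : blockEnd k < blockEnd (k + 1) := by
  show blockEnd k < (k + 1) * (blockEnd k + 1)
  nlinarith

lemma le_blockEnd (k : ℕ) : k ≤ blockEnd k := by
  induction k with
  | zero => exact le_rfl
  | succ k ih => exact ih.trans_lt (blockEnd_lt_succ k)

/-- The index `k` of the block `blockEnd k ≤ i < blockEnd (k + 1)` containing `i`. -/
def blockIdx (i : ℕ) : ℕ := Nat.findGreatest (fun k => blockEnd k ≤ i) i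

lemma blockIdx_eq {i k : ℕ} (h₁ : blockEnd k ≤ i) (h₂ : i < blockEnd (k + 1)) :
    blockIdx i = k := by
  rw [blockIdx, Nat.findGreatest_eq_iff]
  refine ⟨(le_blockEnd k).trans h₁, fun _ => h₁, fun n hkn _ hn => hn.not_gt ?_⟩
  exact h₂.trans_le ((strictMono_nat_of_lt_succ blockEnd_lt_succ).monotone hkn)

def activeTrack (i : ℕ) : ℕ := blockIdx i % 2

lemma lt_blockEnd_of_activeTrack_ne {i k : ℕ} (hi : i < blockEnd (k + 1))
    (h : activeTrack i ≠ k % 2) : i < blockEnd k := by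
  by_contra! hk
  exact h (by rw [activeTrack, blockIdx_eq hk hi])

lemma pow_succ_le_pow_blockEnd_sub_mul_pow {u c : ℝ} (hu : 1 ≤ u) {k o : ℕ}
    (ho : o ≤ blockEnd k) (hk : 1 ≤ u ^ k * c) :
    u ^ (k + 1) ≤ u ^ (blockEnd (k + 1) - o) * c ^ o := by
  obtain ⟨d, hd⟩ := Nat.exists_eq_add_of_le ho
  have hsplit : blockEnd (k + 1) - o = (k + 1) + (k + 1) * d + k * o := by
    rw [show blockEnd (k + 1) = (k + 1) * (blockEnd k + 1) from rfl, hd]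
    apply Nat.sub_eq_of_eq_add
    ring
  calc u ^ (k + 1) = u ^ (k + 1) * 1 * 1 := by ring
    _ ≤ u ^ (k + 1) * u ^ ((k + 1) * d) * (u ^ k * c) ^ o := by
        gcongr
        exacts [one_le_pow₀ hu, one_le_pow₀ hk]
    _ = u ^ (blockEnd (k + 1) - o) * c ^ o := by
        rw [hsplit]
        ring

def SparseAtBlockEnds (Y : ℕ → Fin 2) : Prop :=
  ∃ᶠ k in atTop, #{i ∈ range (blockEnd (k + 1)) | Y i ≠ 0} ≤ blockEnd k

/-- Words are stored reversed: the head of the list is the last symbol read. -/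
def revPrefix {α : Type} (X : ℕ → α) : ℕ → List α
  | 0 => []
  | n + 1 => X n :: revPrefix X n

namespace FSG

variable {α : Type} [Fintype α] {m : ℕ}

lemma bet_le_one (G : FSG α m) (q : Fin (m + 1)) (a : α) : G.bet q a ≤ 1 :=
  G.bet_sum q ▸ single_le_sum (fun b _ => G.bet_nonneg q b) (mem_univ a)

lemma capital_eq_prod (G : FSG α m) (s : ℝ) (X : ℕ → α) (n : ℕ) :
    G.capital s X n = ∏ i ∈ range n, (Fintype.card α : ℝ) ^ s * G.bet (G.state X i) (X i) := by
  induction n with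
  | zero => rfl
  | succ n ih => rw [prod_range_succ, ← ih, capital, mul_comm]

lemma capital_eq_rpow_mul_capital [Nonempty α] (G : FSG α m) (s t : ℝ) (X : ℕ → α) (n : ℕ) :
    G.capital s X n = ((Fintype.card α : ℝ) ^ (s - t)) ^ n * G.capital t X n := by
  have hcard : (0 : ℝ) < Fintype.card α := by exact_mod_cast Fintype.card_pos
  rw [capital_eq_prod, capital_eq_prod]
  nth_rw 2 [← card_range n]
  rw [pow_card_mul_prod]
  refine prod_congr rfl fun i _ => ?_
  rw [← mul_assoc, ← Real.rpow_add hcard, sub_add_cancel]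

def revState (G : FSG α m) : List α → Fin (m + 1)
  | [] => G.q₀
  | a :: w => G.δ (G.revState w) a

noncomputable def martingale (G : FSG α m) : List α → ℝ
  | [] => 1
  | a :: w => Fintype.card α * G.bet (G.revState w) a * G.martingale w

lemma revState_revPrefix (G : FSG α m) (X : ℕ → α) (n : ℕ) :
    G.revState (revPrefix X n) = G.state X n := by
  induction n with
  | zero => rfl
  | succ n ih => rw [revPrefix, revState, ih, state]

lemma capital_one_eq_martingale (G : FSG α m) (X : ℕ → α) (n : ℕ) :
    G.capital 1 X n = G.martingale (revPrefix X n) := by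
  induction n with
  | zero => rfl
  | succ n ih => rw [capital, revPrefix, martingale, ih, revState_revPrefix, Real.rpow_one]

lemma martingale_nonneg (G : FSG α m) (w : List α) : 0 ≤ G.martingale w := by
  induction w with
  | nil => exact zero_le_one
  | cons a w ih =>
      have := G.bet_nonneg (G.revState w) a
      rw [martingale]
      positivity

lemma martingale_le_card_pow (G : FSG α m) (w : List α) :
    G.martingale w ≤ (Fintype.card α : ℝ) ^ w.length := by
  induction w with
  | nil => exact le_rfl
  | cons a w ih =>
      have hbet : (G.bet (G.revState w) a : ℝ) ≤ 1 := by exact_mod_cast G.bet_le_one _ a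
      have := G.bet_nonneg (G.revState w) a
      rw [martingale, List.length_cons, pow_succ]
      calc (Fintype.card α : ℝ) * G.bet (G.revState w) a * G.martingale w
          ≤ Fintype.card α * 1 * (Fintype.card α : ℝ) ^ w.length := by
            gcongr
            exact G.martingale_nonneg w
        _ = _ := by ring

lemma sum_martingale_cons (G : FSG α m) (w : List α) :
    ∑ a, G.martingale (a :: w) = Fintype.card α * G.martingale w := by
  simp only [martingale, ← sum_mul, ← mul_sum]
  rw [← Rat.cast_sum, G.bet_sum, Rat.cast_one, mul_one]

end FSG

section UnivMartingale

variable {α : Type} [Fintype α]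

instance (m : ℕ) : Countable (FSG α m) := by
  refine Function.Injective.countable (f := fun G : FSG α m => (G.δ, G.bet, G.q₀)) ?_
  rintro ⟨δ, bet, _, _, q₀⟩ ⟨δ', bet', _, _, q₀'⟩ h
  simp only [Prod.mk.injEq] at h
  obtain ⟨rfl, rfl, rfl⟩ := h
  rfl

variable [Nonempty α]

instance : Nonempty (Σ m, FSG α m) :=
  ⟨⟨0, { δ := fun _ _ => 0
         bet := fun _ _ => 1 / Fintype.card α
         bet_nonneg := fun _ _ => by positivity
         bet_sum := fun _ => by
           rw [sum_const, card_univ, nsmul_eq_mul, mul_one_div_cancel]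
           exact_mod_cast Fintype.card_ne_zero
         q₀ := 0 }⟩⟩

noncomputable def gamblerEnum : ℕ → Σ m, FSG α m := (exists_surjective_nat _).choose

lemma gamblerEnum_surjective : Function.Surjective (gamblerEnum (α := α)) :=
  (exists_surjective_nat _).choose_spec

noncomputable def univMartingale (w : List α) : ℝ :=
  ∑' k, (1 / 2 : ℝ) ^ (k + 1) * (gamblerEnum k).2.martingale w

lemma summable_univMartingale (w : List α) :
    Summable fun k => (1 / 2 : ℝ) ^ (k + 1) * (gamblerEnum k).2.martingale w := by
  refine Summable.of_nonneg_of_le (fun k => ?_) (fun k => ?_)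
    (((summable_nat_add_iff 1).2 summable_geometric_two).mul_right
      ((Fintype.card α : ℝ) ^ w.length))
  · exact mul_nonneg (by positivity) ((gamblerEnum k).2.martingale_nonneg w)
  · exact mul_le_mul_of_nonneg_left ((gamblerEnum k).2.martingale_le_card_pow w) (by positivity)

lemma univMartingale_nonneg (w : List α) : 0 ≤ univMartingale w :=
  tsum_nonneg fun k => mul_nonneg (by positivity) ((gamblerEnum k).2.martingale_nonneg w)

lemma sum_univMartingale_cons (w : List α) :
    ∑ a, univMartingale (a :: w) = Fintype.card α * univMartingale w := by
  simp only [univMartingale]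
  rw [← Summable.tsum_finsetSum fun a _ => summable_univMartingale (a :: w),
    ← tsum_mul_left]
  refine tsum_congr fun k => ?_
  rw [← mul_sum, (gamblerEnum k).2.sum_martingale_cons]
  ring

lemma univMartingale_cons_le (a : α) (w : List α) :
    univMartingale (a :: w) ≤ Fintype.card α * univMartingale w :=
  sum_univMartingale_cons w ▸
    single_le_sum (fun b _ => univMartingale_nonneg (b :: w)) (mem_univ a)

lemma exists_univMartingale_cons_le (w : List α) :
    ∃ a, univMartingale (a :: w) ≤ univMartingale w := by
  obtain ⟨a, -, ha⟩ := exists_le_of_sum_le (univ_nonempty (α := α))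
    (g := fun _ => univMartingale w) (by rw [sum_univMartingale_cons, sum_const, card_univ,
      nsmul_eq_mul])
  exact ⟨a, ha⟩

lemma univMartingale_nil : univMartingale ([] : List α) = 1 := by
  simp only [univMartingale, FSG.martingale, mul_one, pow_succ, tsum_mul_right,
    tsum_geometric_two]
  norm_num

lemma exists_martingale_le_mul_univMartingale {m : ℕ} (G : FSG α m) :
    ∃ C > 0, ∀ w, G.martingale w ≤ C * univMartingale w := by
  obtain ⟨k, hk⟩ := gamblerEnum_surjective (⟨m, G⟩ : Σ m, FSG α m)
  refine ⟨2 ^ (k + 1), by positivity, fun w => ?_⟩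
  have hterm := (summable_univMartingale w).le_tsum k fun j _ =>
    mul_nonneg (by positivity) ((gamblerEnum j).2.martingale_nonneg w)
  rw [hk] at hterm
  calc G.martingale w = 2 ^ (k + 1) * ((1 / 2 : ℝ) ^ (k + 1) * G.martingale w) := by
        rw [← mul_assoc, ← mul_pow]
        norm_num
    _ ≤ 2 ^ (k + 1) * univMartingale w := mul_le_mul_of_nonneg_left hterm (by positivity)

end UnivMartingale

noncomputable def diagonalBit (n : ℕ) (w : List (Fin 2)) : Fin 2 :=
  if n % 2 = activeTrack (n / 2) then (exists_univMartingale_cons_le w).choose else 0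

noncomputable def diagonalPrefix : ℕ → List (Fin 2)
  | 0 => []
  | n + 1 => diagonalBit n (diagonalPrefix n) :: diagonalPrefix n

noncomputable def diagonalSeq (n : ℕ) : Fin 2 := diagonalBit n (diagonalPrefix n)

lemma revPrefix_diagonalSeq (n : ℕ) : revPrefix diagonalSeq n = diagonalPrefix n := by
  induction n with
  | zero => rfl
  | succ n ih => rw [revPrefix, ih, diagonalPrefix, diagonalSeq]

lemma univMartingale_diagonalPrefix_succ_le (n : ℕ) :
    univMartingale (diagonalPrefix (n + 1)) ≤ 2 * univMartingale (diagonalPrefix n) := by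
  rw [diagonalPrefix]
  simpa using univMartingale_cons_le (diagonalBit n (diagonalPrefix n)) (diagonalPrefix n)

lemma univMartingale_diagonalPrefix_succ_le_of_active {n : ℕ} (h : n % 2 = activeTrack (n / 2)) :
    univMartingale (diagonalPrefix (n + 1)) ≤ univMartingale (diagonalPrefix n) := by
  rw [diagonalPrefix, diagonalBit, if_pos h]
  exact (exists_univMartingale_cons_le _).choose_spec

lemma univMartingale_diagonalPrefix_two_mul_le (i : ℕ) :
    univMartingale (diagonalPrefix (2 * i)) ≤ 2 ^ i := by
  induction i with
  | zero => exact univMartingale_nil.le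
  | succ i ih =>
      have h₀ := univMartingale_diagonalPrefix_succ_le (2 * i)
      have h₁ : univMartingale (diagonalPrefix (2 * (i + 1))) ≤
          2 * univMartingale (diagonalPrefix (2 * i + 1)) :=
        univMartingale_diagonalPrefix_succ_le (2 * i + 1)
      have htrack : activeTrack i < 2 := Nat.mod_lt _ two_pos
      -- exactly one of the positions `2 i`, `2 i + 1` is on the active track
      have hpair : univMartingale (diagonalPrefix (2 * (i + 1))) ≤
          2 * univMartingale (diagonalPrefix (2 * i)) := by
        by_cases h : activeTrack i = 0
        · have := univMartingale_diagonalPrefix_succ_le_of_active (n := 2 * i)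
            (by rw [show 2 * i / 2 = i by omega]; omega)
          linarith
        · have : univMartingale (diagonalPrefix (2 * (i + 1))) ≤
              univMartingale (diagonalPrefix (2 * i + 1)) :=
            univMartingale_diagonalPrefix_succ_le_of_active (n := 2 * i + 1)
              (by rw [show (2 * i + 1) / 2 = i by omega]; omega)
          linarith
      rw [pow_succ]
      linarith

lemma univMartingale_diagonalPrefix_le (n : ℕ) :
    univMartingale (diagonalPrefix n) ≤ 2 * 2 ^ (n / 2) := by
  obtain ⟨i, rfl | rfl⟩ := Nat.even_or_odd' n
  · rw [Nat.mul_div_cancel_left i two_pos]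
    linarith [univMartingale_diagonalPrefix_two_mul_le i, pow_pos (two_pos : (0 : ℝ) < 2) i]
  · rw [show (2 * i + 1) / 2 = i by omega]
    linarith [univMartingale_diagonalPrefix_succ_le (2 * i),
      univMartingale_diagonalPrefix_two_mul_le i]

lemma pow_mul_two_pow_half_le_one {r : ℝ} (h₀ : 0 ≤ r) (h : 2 * r ^ 2 ≤ 1) (n : ℕ) :
    r ^ n * 2 ^ (n / 2) ≤ 1 := by
  have hr : r ≤ 1 := by nlinarith
  calc r ^ n * 2 ^ (n / 2) ≤ r ^ (2 * (n / 2)) * 2 ^ (n / 2) :=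
        mul_le_mul_of_nonneg_right (pow_le_pow_of_le_one h₀ hr (Nat.mul_div_le n 2))
          (by positivity)
    _ = (2 * r ^ 2) ^ (n / 2) := by rw [pow_mul, mul_pow]; ring
    _ ≤ 1 := pow_le_one₀ (by positivity) h

lemma capital_diagonalSeq_bounded {m : ℕ} (G : FSG (Fin 2) m) {s : ℝ} (hs : s ≤ 1 / 2) :
    ∃ C, ∀ n, G.capital s diagonalSeq n ≤ C := by
  obtain ⟨C, hC₀, hC⟩ := exists_martingale_le_mul_univMartingale G
  set r : ℝ := 2 ^ (s - 1) with hr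
  have hr₀ : 0 ≤ r := by positivity
  have hr₂ : 2 * r ^ 2 ≤ 1 := by
    rw [hr, ← Real.rpow_natCast, ← Real.rpow_mul zero_le_two]
    nth_rw 1 [← Real.rpow_one 2]
    rw [← Real.rpow_add two_pos]
    exact Real.rpow_le_one_of_one_le_of_nonpos one_le_two (by push_cast; linarith)
  refine ⟨2 * C, fun n => ?_⟩
  rw [G.capital_eq_rpow_mul_capital s 1, G.capital_one_eq_martingale, revPrefix_diagonalSeq]
  simp only [Fintype.card_fin, Nat.cast_ofNat]
  calc r ^ n * G.martingale (diagonalPrefix n)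
      ≤ r ^ n * (C * (2 * 2 ^ (n / 2))) := by
        gcongr
        exact (hC _).trans (by gcongr; exact univMartingale_diagonalPrefix_le n)
    _ = 2 * C * (r ^ n * 2 ^ (n / 2)) := by ring
    _ ≤ 2 * C := mul_le_of_le_one_right (by positivity) (pow_mul_two_pow_half_le_one hr₀ hr₂ n)

lemma AP_diagonalSeq_eq_zero {a i : ℕ} (ha : a < 2) (h : activeTrack i ≠ a) :
    AP diagonalSeq 2 a i = 0 := by
  have hmod : (a + i * 2) % 2 = a := by omega
  have hdiv : (a + i * 2) / 2 = i := by omega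
  rw [AP, diagonalSeq, diagonalBit, hmod, hdiv, if_neg (Ne.symm h)]

lemma sparseAtBlockEnds_AP_diagonalSeq {a : ℕ} (ha : a < 2) :
    SparseAtBlockEnds (AP diagonalSeq 2 a) := by
  rw [SparseAtBlockEnds, frequently_atTop]
  intro N
  refine ⟨2 * N + (1 - a), by omega, (card_le_card fun i hi => ?_).trans (card_range _).le⟩
  simp only [mem_filter, mem_range] at hi ⊢
  refine lt_blockEnd_of_activeTrack_ne hi.1 fun h => hi.2 (AP_diagonalSeq_eq_zero ha ?_)
  omega

def biasG (q : Set.Icc (0 : ℚ) 1) : FSG (Fin 2) 0 where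
  δ _ _ := 0
  bet _ a := if a = 0 then q else 1 - q
  bet_nonneg _ a := by
    split_ifs
    exacts [q.2.1, sub_nonneg.2 q.2.2]
  bet_sum _ := by simp [Fin.sum_univ_two]
  q₀ := 0

lemma biasG_capital (q : Set.Icc (0 : ℚ) 1) (s : ℝ) (Y : ℕ → Fin 2) (n : ℕ) :
    (biasG q).capital s Y n =
      (2 ^ s * q) ^ #{i ∈ range n | Y i = 0} * (2 ^ s * (1 - q)) ^ #{i ∈ range n | Y i ≠ 0} := by
  rw [FSG.capital_eq_prod, ← prod_const, ← prod_const, ← prod_ite]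
  refine prod_congr rfl fun i _ => ?_
  split_ifs with h <;> simp [biasG, h]

lemma biasG_succeeds {q : Set.Icc (0 : ℚ) 1} {s : ℝ} {Y : ℕ → Fin 2}
    (hq : 1 < 2 ^ s * (q : ℝ)) (hq₁ : (q : ℚ) < 1) (hY : SparseAtBlockEnds Y) :
    (biasG q).Succeeds s Y := by
  intro C
  set u : ℝ := 2 ^ s * q
  set v : ℝ := 2 ^ s * (1 - q)
  have hv : 0 < v := mul_pos (by positivity) (sub_pos.2 (by exact_mod_cast hq₁))
  have hpow := tendsto_pow_atTop_atTop_of_one_lt hq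
  have hev : ∀ᶠ k in atTop, 1 ≤ u ^ k * v ∧ C < u ^ (k + 1) :=
    ((hpow.eventually_ge_atTop (1 / v)).mono fun k hk => (div_le_iff₀ hv).1 hk).and
      ((hpow.comp (tendsto_add_atTop_nat 1)).eventually_gt_atTop C)
  obtain ⟨k, hsparse, hk, hC⟩ := (hY.and_eventually hev).exists
  refine ⟨blockEnd (k + 1), ?_⟩
  have hzeros : #{i ∈ range (blockEnd (k + 1)) | Y i = 0} =
      blockEnd (k + 1) - #{i ∈ range (blockEnd (k + 1)) | Y i ≠ 0} := by
    have := card_filter_add_card_filter_not (s := range (blockEnd (k + 1))) (Y · = 0)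
    rw [card_range] at this
    exact Nat.eq_sub_of_add_eq this
  rw [biasG_capital, hzeros]
  exact hC.trans_le (pow_succ_le_pow_blockEnd_sub_mul_pow hq.le hsparse hk)

lemma exists_biasG_succeeds {s : ℝ} (hs : 0 < s) {Y : ℕ → Fin 2} (hY : SparseAtBlockEnds Y) :
    ∃ q, (biasG q).Succeeds s Y := by
  obtain ⟨q, hlo, hhi⟩ :=
    exists_rat_btwn (Real.rpow_lt_one_of_one_lt_of_neg one_lt_two (neg_neg_of_pos hs))
  have hq₀ : (0 : ℝ) < q := (Real.rpow_pos_of_pos two_pos _).trans hlo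
  refine ⟨⟨q, by exact_mod_cast hq₀.le, by exact_mod_cast hhi.le⟩,
    biasG_succeeds ?_ (by exact_mod_cast hhi) hY⟩
  calc (1 : ℝ) = 2 ^ s * 2 ^ (-s) := by rw [← Real.rpow_add two_pos, add_neg_cancel, Real.rpow_zero]
    _ < 2 ^ s * q := by gcongr

def parityG (q : Set.Icc (0 : ℚ) 1) : FSG (Fin 2) 1 where
  δ p _ := p + 1
  bet p a := if p = 0 then 1 / 2 else (biasG q).bet 0 a
  bet_nonneg p a := by
    split_ifs
    exacts [by norm_num, (biasG q).bet_nonneg 0 a]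
  bet_sum p := by
    split_ifs
    exacts [by norm_num [Fin.sum_univ_two], (biasG q).bet_sum 0]
  q₀ := 0

lemma parityG_state_two_mul (q : Set.Icc (0 : ℚ) 1) (X : ℕ → Fin 2) (n : ℕ) :
    (parityG q).state X (2 * n) = 0 := by
  induction n with
  | zero => rfl
  | succ n ih =>
      rw [show 2 * (n + 1) = 2 * n + 1 + 1 by ring, FSG.state, FSG.state, ih]
      show (0 : Fin 2) + 1 + 1 = 0
      decide

lemma parityG_capital_two_mul (q : Set.Icc (0 : ℚ) 1) (s : ℝ) (X : ℕ → Fin 2) (n : ℕ) :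
    (parityG q).capital s X (2 * n) = (biasG q).capital (2 * s - 1) (AP X 2 1) n := by
  have hrpow : (2 : ℝ) ^ (2 * s - 1) = 2 ^ s * 2 ^ s / 2 := by
    rw [Real.rpow_sub two_pos, Real.rpow_one, two_mul, Real.rpow_add two_pos]
  induction n with
  | zero => rfl
  | succ n ih =>
      rw [show 2 * (n + 1) = 2 * n + 1 + 1 by ring, FSG.capital, FSG.capital, FSG.state,
        parityG_state_two_mul, ih, FSG.capital, Fin.fin_one_eq_zero ((biasG q).state _ n)]
      simp only [parityG, AP, Fintype.card_fin, Nat.cast_ofNat, hrpow,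
        show 1 + n * 2 = 2 * n + 1 by ring]
      push_cast
      ring

lemma exists_parityG_succeeds {s : ℝ} (hs : 1 / 2 < s) {X : ℕ → Fin 2}
    (hX : SparseAtBlockEnds (AP X 2 1)) : ∃ q, (parityG q).Succeeds s X := by
  obtain ⟨q, hq⟩ := exists_biasG_succeeds (by linarith : 0 < 2 * s - 1) hX
  refine ⟨q, fun C => ?_⟩
  obtain ⟨n, hn⟩ := hq C
  exact ⟨2 * n, by rwa [parityG_capital_two_mul]⟩

def FSG.toFSRG {α : Type} [Fintype α] {m : ℕ} (G : FSG α m) (β : Type) [Fintype β] :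
    FSRG α β 0 m where
  δ q _ a := G.δ q a
  bet q _ a := G.bet q a
  bet_nonneg q _ a := G.bet_nonneg q a
  bet_sum q _ := G.bet_sum q
  q₀ := G.q₀

lemma FSG.Succeeds.toFSRG {α β : Type} [Fintype α] [Fintype β] {m : ℕ} {G : FSG α m} {s : ℝ}
    {X : ℕ → α} (h : G.Succeeds s X) (Y : ℕ → β) : (G.toFSRG β).Succeeds s Y X := by
  have hstate : ∀ n, (G.toFSRG β).state Y X n = G.state X n := by
    intro n
    induction n with
    | zero => rfl
    | succ n ih => rw [FSRG.state, ih]; rfl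
  have hcapital : ∀ n, (G.toFSRG β).capital s Y X n = G.capital s X n := by
    intro n
    induction n with
    | zero => rfl
    | succ n ih => rw [FSRG.capital, ih, hstate]; rfl
  intro C
  obtain ⟨n, hn⟩ := h C
  exact ⟨n, by rwa [hcapital]⟩

lemma sInf_eq_of_Ioi_subset {S : Set ℝ} {c : ℝ} (hlow : ∀ s ∈ S, c ≤ s) (hS : Set.Ioi c ⊆ S) :
    sInf S = c :=
  csInf_eq_of_forall_ge_of_forall_gt_exists_lt ⟨c + 1, hS (by simp)⟩ hlow fun w hw =>
    ⟨(c + w) / 2, hS (by simp only [Set.mem_Ioi]; linarith), by linarith⟩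

lemma dimFS_eq_zero_of_sparseAtBlockEnds {Y : ℕ → Fin 2} (hY : SparseAtBlockEnds Y) :
    dimFS Y = 0 :=
  sInf_eq_of_Ioi_subset (fun _ hs => hs.1) fun _ hs =>
    have ⟨_, hq⟩ := exists_biasG_succeeds hs hY
    ⟨hs.out.le, 0, _, hq⟩

lemma dimFSRel_eq_zero_of_sparseAtBlockEnds {β : Type} [Fintype β] {Y : ℕ → Fin 2}
    (hY : SparseAtBlockEnds Y) (Z : ℕ → β) : dimFSRel Y Z = 0 :=
  sInf_eq_of_Ioi_subset (fun _ hs => hs.1) fun _ hs =>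
    have ⟨_, hq⟩ := exists_biasG_succeeds hs hY
    ⟨hs.out.le, 0, 0, _, hq.toFSRG Z⟩

lemma dimFS_diagonalSeq : dimFS diagonalSeq = 1 / 2 := by
  refine sInf_eq_of_Ioi_subset (fun s ⟨_, _, G, hG⟩ => not_lt.1 fun hs => ?_) fun s hs =>
    have ⟨_, hq⟩ := exists_parityG_succeeds hs (sparseAtBlockEnds_AP_diagonalSeq one_lt_two)
    ⟨by linarith [hs.out], 1, _, hq⟩
  obtain ⟨C, hC⟩ := capital_diagonalSeq_bounded G hs.le
  obtain ⟨n, hn⟩ := hG C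
  exact (hC n).not_gt hn

/-- there is a binary sequence `X` with
`dim_FS(X) > (1/2)(dim_FS(A_{2,0}) + dim_FS^{A_{2,0}}(A_{2,1}))`; in fact with
`dim_FS(X) = 1/2`, `dim_FS(A_{2,0}) = 0` and `dim_FS^{A_{2,0}}(A_{2,1}) = 0`. -/
theorem exists_dimFS_gt_avg_of_AP_dims :
    ∃ X : ℕ → Fin 2,
      dimFS X = 1 / 2 ∧
      dimFS (AP X 2 0) = 0 ∧
      dimFSRel (AP X 2 1) (AP X 2 0) = 0 ∧
      dimFS X > (1 / 2) * (dimFS (AP X 2 0) + dimFSRel (AP X 2 1) (AP X 2 0)) := by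
  have hX := dimFS_diagonalSeq
  have h₀ := dimFS_eq_zero_of_sparseAtBlockEnds (sparseAtBlockEnds_AP_diagonalSeq two_pos)
  have h₁ := dimFSRel_eq_zero_of_sparseAtBlockEnds
    (sparseAtBlockEnds_AP_diagonalSeq one_lt_two) (AP diagonalSeq 2 0)
  refine ⟨diagonalSeq, hX, h₀, h₁, ?_⟩
  rw [hX, h₀, h₁]
  norm_num
end
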